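/- arXiv:1912.07713 — 4 statements merged into one kernel-verified Lean document; each statement's English description precedes it below -/
import Mathlib

section
/- Let θ, τ be permutations each of which begins with its maximum or ends with its minimum (negative permutations), let a, b, c, d be non-negative integers, and write k for the increasing permutation of size k. Then a ⊕ θ ⊕ b ≤ c ⊕ τ ⊕ d if and only if max(0, a−c) ⊕ θ ⊕ max(0, b−d) ≤ τ. -/
open Equiv Filter

/-- A permutation pattern: a size together with a permutation of that size. -/
abbrev Pattern := Σ n : ℕ, Equiv.Perm (Fin n)

/-- Direct sum of permutations: `α` to the left of and below `β`. -/
def sumPerm {m n : ℕ} (α : Equiv.Perm (Fin m)) (β : Equiv.Perm (Fin n)) :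
    Equiv.Perm (Fin (m + n)) :=
  finSumFinEquiv.symm.trans ((α.sumCongr β).trans finSumFinEquiv)

/-- Skew sum of permutations: `α` to the left of and above `β`. -/
def skewPerm {m n : ℕ} (α : Equiv.Perm (Fin m)) (β : Equiv.Perm (Fin n)) :
    Equiv.Perm (Fin (m + n)) :=
  finSumFinEquiv.symm.trans ((α.sumCongr β).trans
    ((Equiv.sumComm (Fin m) (Fin n)).trans (finSumFinEquiv.trans (finCongr (Nat.add_comm n m)))))

/-- Pattern containment: `Contains p q` means `p` is contained (as a pattern) in `q`. -/
def Contains (p q : Pattern) : Prop :=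
  ∃ f : Fin p.1 → Fin q.1, StrictMono f ∧ ∀ s t, p.2 s < p.2 t ↔ q.2 (f s) < q.2 (f t)

def sumP (p q : Pattern) : Pattern := ⟨p.1 + q.1, sumPerm p.2 q.2⟩
def skewP (p q : Pattern) : Pattern := ⟨p.1 + q.1, skewPerm p.2 q.2⟩

/-- The singleton permutation 1. -/
def onePat : Pattern := ⟨1, 1⟩
/-- The increasing permutation of size `k`. -/
def idPat (k : ℕ) : Pattern := ⟨k, 1⟩
/-- The decreasing permutation of size `k`. -/
def revPat (k : ℕ) : Pattern := ⟨k, Fin.revPerm⟩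

def BeginsWithMin (p : Pattern) : Prop := ∃ h : 0 < p.1, p.2 ⟨0, h⟩ = ⟨0, h⟩
def EndsWithMax (p : Pattern) : Prop :=
  ∃ h : 0 < p.1, p.2 ⟨p.1 - 1, by omega⟩ = ⟨p.1 - 1, by omega⟩
def BeginsWithMax (p : Pattern) : Prop :=
  ∃ h : 0 < p.1, p.2 ⟨0, h⟩ = ⟨p.1 - 1, by omega⟩
def EndsWithMin (p : Pattern) : Prop :=
  ∃ h : 0 < p.1, p.2 ⟨p.1 - 1, by omega⟩ = ⟨0, h⟩

def IsIncreasingP (p : Pattern) : Prop := ∀ i j : Fin p.1, i ≤ j → p.2 i ≤ p.2 j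
def IsDecreasingP (p : Pattern) : Prop := ∀ i j : Fin p.1, i ≤ j → p.2 j ≤ p.2 i
/-- Monotone permutations (increasing or decreasing). -/
def MonotoneP (p : Pattern) : Prop := IsIncreasingP p ∨ IsDecreasingP p
/-- A crossed permutation is one that is not monotone. -/
def CrossedP (p : Pattern) : Prop := ¬ MonotoneP p
/-- Positive: size at least 2, begins with its minimum or ends with its maximum. -/
def PositiveP (p : Pattern) : Prop := 2 ≤ p.1 ∧ (BeginsWithMin p ∨ EndsWithMax p)
/-- Negative: size at least 2, begins with its maximum or ends with its minimum. -/
def NegativeP (p : Pattern) : Prop := 2 ≤ p.1 ∧ (BeginsWithMax p ∨ EndsWithMin p)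

/-- The class X: the closure of {1} under π ↦ 1⊕π, 1⊖π, π⊕1, π⊖1. -/
inductive InX : Pattern → Prop
  | base : InX onePat
  | sumL {p : Pattern} : InX p → InX (sumP onePat p)
  | skewL {p : Pattern} : InX p → InX (skewP onePat p)
  | sumR {p : Pattern} : InX p → InX (sumP p onePat)
  | skewR {p : Pattern} : InX p → InX (skewP p onePat)

/-!
Since θ is negative, every entry of θ takes part in an inversion with another entry of θ (its
first entry is its maximum, or its last entry is its minimum). In `c ⊕ τ ⊕ d` every inversion lies
inside the copy of τ, so an embedding of `a ⊕ θ ⊕ b` into `c ⊕ τ ⊕ d` maps θ into τ. Strict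
monotonicity then pushes the last `a - c` entries of the prefix and the first `b - d` entries of
the suffix into τ as well, which yields `(a - c) ⊕ θ ⊕ (b - d) ≤ τ`. Conversely
`a ⊕ θ ⊕ b = min a c ⊕ ((a - c) ⊕ θ ⊕ (b - d)) ⊕ min b d`, which embeds into `c ⊕ τ ⊕ d`
blockwise.
-/

abbrev padP (a : ℕ) (p : Pattern) (b : ℕ) : Pattern := sumP (sumP (idPat a) p) (idPat b)

theorem padP_fst (a : ℕ) (p : Pattern) (b : ℕ) : (padP a p b).1 = a + p.1 + b := rfl

def IsPatternEmbedding (p q : Pattern) (f : Fin p.1 → Fin q.1) : Prop :=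
  StrictMono f ∧ ∀ s t, p.2 s < p.2 t ↔ q.2 (f s) < q.2 (f t)

theorem IsPatternEmbedding.comp {p q r : Pattern} {g : Fin q.1 → Fin r.1} {f : Fin p.1 → Fin q.1}
    (hg : IsPatternEmbedding q r g) (hf : IsPatternEmbedding p q f) :
    IsPatternEmbedding p r (g ∘ f) :=
  ⟨hg.1.comp hf.1, fun s t => (hf.2 s t).trans (hg.2 _ _)⟩

theorem Contains.trans {p q r : Pattern} (hpq : Contains p q) (hqr : Contains q r) :
    Contains p r :=
  let ⟨f, hf⟩ := hpq
  let ⟨g, hg⟩ := hqr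
  ⟨g ∘ f, IsPatternEmbedding.comp hg hf⟩

theorem isPatternEmbedding_cast {p q : Pattern} (h : p.1 = q.1)
    (hv : ∀ i, (q.2 (Fin.cast h i) : ℕ) = p.2 i) : IsPatternEmbedding p q (Fin.cast h) :=
  ⟨Fin.cast_strictMono h, fun s t => by rw [Fin.lt_def, Fin.lt_def, hv, hv]⟩

@[simp]
theorem sumPerm_castAdd {m n : ℕ} (α : Perm (Fin m)) (β : Perm (Fin n)) (i : Fin m) :
    sumPerm α β (Fin.castAdd n i) = Fin.castAdd n (α i) := by
  simp [sumPerm]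

@[simp]
theorem sumPerm_natAdd {m n : ℕ} (α : Perm (Fin m)) (β : Perm (Fin n)) (i : Fin n) :
    sumPerm α β (Fin.natAdd m i) = Fin.natAdd m (β i) := by
  simp [sumPerm]

theorem sumPerm_apply_val {m n : ℕ} (α : Perm (Fin m)) (β : Perm (Fin n)) (i : Fin (m + n)) :
    (sumPerm α β i : ℕ) =
      if h : (i : ℕ) < m then (α ⟨i, h⟩ : ℕ) else m + β ⟨i - m, by omega⟩ := by
  induction i using Fin.addCases with
  | left i => simp
  | right i => simp

theorem sumP_mono {p q r s : Pattern} (hpq : Contains p q) (hrs : Contains r s) :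
    Contains (sumP p r) (sumP q s) := by
  obtain ⟨f, hf, hfv⟩ := hpq
  obtain ⟨g, hg, hgv⟩ := hrs
  have hf' : ∀ x y, (f x : ℕ) < f y ↔ (x : ℕ) < y := fun _ _ => hf.lt_iff_lt
  have hg' : ∀ x y, (g x : ℕ) < g y ↔ (x : ℕ) < y := fun _ _ => hg.lt_iff_lt
  simp only [Fin.lt_def] at hfv hgv
  let F : Fin (p.1 + r.1) → Fin (q.1 + s.1) :=
    Fin.addCases (Fin.castAdd s.1 ∘ f) (Fin.natAdd q.1 ∘ g)
  refine ⟨F, ?_, ?_⟩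
  · show StrictMono F
    intro x y
    induction x using Fin.addCases <;> induction y using Fin.addCases <;>
      simp only [F, Fin.addCases_left, Fin.addCases_right, Function.comp_apply, Fin.lt_def,
        Fin.val_castAdd, Fin.val_natAdd, add_lt_add_iff_left, hf', hg'] <;> omega
  · show ∀ x y, sumPerm p.2 r.2 x < sumPerm p.2 r.2 y ↔
      sumPerm q.2 s.2 (F x) < sumPerm q.2 s.2 (F y)
    intro x y
    induction x using Fin.addCases <;> induction y using Fin.addCases <;>
      simp only [F, Fin.addCases_left, Fin.addCases_right, Function.comp_apply, sumPerm_castAdd,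
        sumPerm_natAdd, Fin.lt_def, Fin.val_castAdd, Fin.val_natAdd, add_lt_add_iff_left,
        hfv, hgv] <;> omega

theorem contains_idPat_of_le {m n : ℕ} (h : m ≤ n) : Contains (idPat m) (idPat n) :=
  ⟨Fin.castLE h, Fin.strictMono_castLE h, fun _ _ => Iff.rfl⟩

theorem padP_mono {p q : Pattern} {a b c d : ℕ} (hac : a ≤ c) (hbd : b ≤ d) (h : Contains p q) :
    Contains (padP a p b) (padP c q d) :=
  sumP_mono (sumP_mono (contains_idPat_of_le hac) h) (contains_idPat_of_le hbd)

theorem padP_apply (a : ℕ) (p : Pattern) (b : ℕ) (i : Fin (padP a p b).1) :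
    ((padP a p b).2 i : ℕ) =
      if h : a ≤ i ∧ (i : ℕ) < a + p.1 then a + p.2 ⟨i - a, by omega⟩ else i := by
  revert i
  show ∀ i : Fin (a + p.1 + b),
    (sumPerm (sumPerm (1 : Perm (Fin a)) p.2) (1 : Perm (Fin b)) i : ℕ) = _
  intro i
  simp only [sumPerm_apply_val, Perm.one_apply]
  split_ifs <;> omega

theorem padP_apply_mk (a : ℕ) (p : Pattern) (b k : ℕ) (hk : k < (padP a p b).1) :
    ((padP a p b).2 ⟨k, hk⟩ : ℕ) =
      if h : a ≤ k ∧ k < a + p.1 then a + p.2 ⟨k - a, by omega⟩ else k :=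
  padP_apply a p b ⟨k, hk⟩

def midPos (a b : ℕ) {p : Pattern} (i : Fin p.1) : Fin (padP a p b).1 :=
  Fin.castAdd b (Fin.natAdd a i)

@[simp]
theorem val_midPos (a b : ℕ) {p : Pattern} (i : Fin p.1) : (midPos a b i : ℕ) = a + i := rfl

theorem padP_apply_midPos (a b : ℕ) {p : Pattern} (i : Fin p.1) :
    ((padP a p b).2 (midPos a b i) : ℕ) = a + p.2 i := by
  rw [padP_apply, dif_pos (by simp)]
  simp

theorem isPatternEmbedding_midPos (a b : ℕ) (p : Pattern) :
    IsPatternEmbedding p (padP a p b) (midPos a b) :=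
  ⟨fun i j h => by rw [Fin.lt_def, val_midPos, val_midPos]; exact Nat.add_lt_add_left h a,
    fun s t => by
      rw [Fin.lt_def, Fin.lt_def, padP_apply_midPos, padP_apply_midPos, add_lt_add_iff_left]⟩

theorem IsPatternEmbedding.contains_of_mem_block {p q : Pattern} {c d : ℕ}
    {f : Fin p.1 → Fin (padP c q d).1} (hf : IsPatternEmbedding p (padP c q d) f)
    (hmem : ∀ i, c ≤ (f i : ℕ) ∧ (f i : ℕ) < c + q.1) : Contains p q := by
  refine ⟨fun i => ⟨f i - c, by have := hmem i; omega⟩, fun i j hij => ?_, fun s t => ?_⟩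
  · have := hf.1 hij
    have := hmem i
    rw [Fin.lt_def] at *
    simp only
    omega
  · rw [hf.2, Fin.lt_def, Fin.lt_def, padP_apply, padP_apply, dif_pos (hmem s), dif_pos (hmem t),
      add_lt_add_iff_left]

theorem padP_padP_fst {a₀ e e' b₀ a b : ℕ} {p : Pattern} (ha : a₀ + e = a) (hb : e' + b₀ = b) :
    (padP a₀ (padP e p e') b₀).1 = (padP a p b).1 := by
  subst ha hb
  simp only [padP_fst]
  ring

theorem padP_padP_apply (a₀ e e' b₀ : ℕ) (p : Pattern) (k : ℕ)
    (h₁ : k < (padP a₀ (padP e p e') b₀).1) (h₂ : k < (padP (a₀ + e) p (e' + b₀)).1) :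
    ((padP a₀ (padP e p e') b₀).2 ⟨k, h₁⟩ : ℕ) = (padP (a₀ + e) p (e' + b₀)).2 ⟨k, h₂⟩ := by
  rw [padP_apply_mk, padP_apply_mk]
  have := padP_fst e p e'
  split_ifs <;> (try rw [padP_apply_mk]) <;> (try split_ifs) <;> (try simp only [Nat.sub_sub]) <;>
    omega

theorem isPatternEmbedding_padP_padP (a₀ e e' b₀ : ℕ) {a b : ℕ} {p : Pattern} (ha : a₀ + e = a)
    (hb : e' + b₀ = b) :
    IsPatternEmbedding (padP a₀ (padP e p e') b₀) (padP a p b)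
      (Fin.cast (padP_padP_fst ha hb)) := by
  subst ha hb
  exact isPatternEmbedding_cast _ fun i => (padP_padP_apply a₀ e e' b₀ p i.1 i.2 _).symm

theorem contains_padP_padP (a₀ e e' b₀ : ℕ) {a b : ℕ} {p : Pattern} (ha : a₀ + e = a)
    (hb : e' + b₀ = b) : Contains (padP a p b) (padP a₀ (padP e p e') b₀) := by
  subst ha hb
  exact ⟨_, isPatternEmbedding_cast (padP_padP_fst rfl rfl).symm fun i =>
    padP_padP_apply a₀ e e' b₀ p i.1 _ i.2⟩

def IsInversion (p : Pattern) (i j : Fin p.1) : Prop := i < j ∧ p.2 j < p.2 i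

theorem IsPatternEmbedding.isInversion {p q : Pattern} {f : Fin p.1 → Fin q.1}
    (hf : IsPatternEmbedding p q f) {i j : Fin p.1} (h : IsInversion p i j) :
    IsInversion q (f i) (f j) :=
  ⟨hf.1 h.1, (hf.2 j i).1 h.2⟩

theorem IsInversion.mem_block_of_padP {c d : ℕ} {q : Pattern} {y y' : Fin (padP c q d).1}
    (h : IsInversion (padP c q d) y y') : c ≤ (y : ℕ) ∧ (y' : ℕ) < c + q.1 := by
  obtain ⟨hyy', hval⟩ := h
  rw [Fin.lt_def] at hyy' hval
  rw [padP_apply, padP_apply] at hval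
  split_ifs at hval <;> omega

theorem NegativeP.exists_isInversion {θ : Pattern} (hθ : NegativeP θ) (i : Fin θ.1) :
    ∃ j, IsInversion θ i j ∨ IsInversion θ j i := by
  obtain ⟨h2, ⟨h0, hmax⟩ | ⟨h0, hmin⟩⟩ := hθ
  · have top : ∀ j, j ≠ ⟨0, h0⟩ → θ.2 j < θ.2 ⟨0, h0⟩ := fun j hj => by
      have := θ.2.injective.ne hj
      have := (θ.2 j).isLt
      simp only [hmax, ne_eq, Fin.ext_iff, Fin.lt_def] at *
      omega
    by_cases hi : i = ⟨0, h0⟩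
    · subst hi
      exact ⟨⟨1, by omega⟩, Or.inl ⟨by simp [Fin.lt_def], top _ (by simp)⟩⟩
    · refine ⟨⟨0, h0⟩, Or.inr ⟨?_, top i hi⟩⟩
      simp only [Fin.ext_iff, Fin.lt_def] at hi ⊢
      omega
  · have bot : ∀ j, j ≠ ⟨θ.1 - 1, by omega⟩ → θ.2 ⟨θ.1 - 1, by omega⟩ < θ.2 j := fun j hj => by
      have := θ.2.injective.ne hj
      simp only [hmin, ne_eq, Fin.ext_iff, Fin.lt_def] at *
      omega
    by_cases hi : i = ⟨θ.1 - 1, by omega⟩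
    · subst hi
      refine ⟨⟨θ.1 - 2, by omega⟩, Or.inr ⟨?_, bot _ ?_⟩⟩ <;> simp [Fin.lt_def] <;> omega
    · refine ⟨⟨θ.1 - 1, by omega⟩, Or.inl ⟨?_, bot i hi⟩⟩
      have := i.isLt
      simp only [Fin.ext_iff, Fin.lt_def] at hi ⊢
      omega

theorem IsPatternEmbedding.mem_block_of_negativeP {θ τ : Pattern} {a b c d : ℕ}
    {f : Fin (padP a θ b).1 → Fin (padP c τ d).1}
    (hf : IsPatternEmbedding (padP a θ b) (padP c τ d) f) (hθ : NegativeP θ)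
    (x : Fin (padP a θ b).1) (hx₁ : a ≤ (x : ℕ)) (hx₂ : (x : ℕ) < a + θ.1) :
    c ≤ (f x : ℕ) ∧ (f x : ℕ) < c + τ.1 := by
  set i : Fin θ.1 := ⟨x - a, by omega⟩
  have hx : x = midPos a b i := Fin.ext (by simp [i]; omega)
  rw [hx]
  obtain ⟨j, h | h⟩ := hθ.exists_isInversion i
  all_goals
    have hinv := hf.isInversion ((isPatternEmbedding_midPos a b θ).isInversion h)
    have := hinv.mem_block_of_padP
    have := Fin.lt_def.1 hinv.1
    omega

theorem StrictMono.val_le_val_apply {n m : ℕ} {f : Fin n → Fin m} (hf : StrictMono f)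
    (i : Fin n) : (i : ℕ) ≤ f i := by
  obtain ⟨i, hi⟩ := i
  induction i with
  | zero => exact Nat.zero_le _
  | succ k ih => exact (ih (by omega)).trans_lt (hf (Fin.mk_lt_mk.2 k.lt_succ_self))

theorem StrictMono.val_apply_add_le {n m : ℕ} {f : Fin n → Fin m} (hf : StrictMono f)
    (i : Fin n) : (f i : ℕ) + (n - i) ≤ m := by
  have hrev : StrictMono (Fin.rev ∘ f ∘ Fin.rev) := fun x y h => by
    simpa using hf (Fin.rev_lt_rev.2 h)
  have := hrev.val_le_val_apply i.rev
  simp only [Function.comp_apply, Fin.rev_rev, Fin.val_rev] at this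
  omega

/-- The `a - c` positions just before the block are at least `c`, and the `b - d` positions just
after it still leave room for the remaining `d` positions of the target. -/
theorem StrictMono.mapsTo_window {a n b c m d : ℕ} {f : Fin (a + n + b) → Fin (c + m + d)}
    (hf : StrictMono f) (hn : 0 < n)
    (hblock : ∀ x : Fin (a + n + b), a ≤ (x : ℕ) → (x : ℕ) < a + n →
      c ≤ (f x : ℕ) ∧ (f x : ℕ) < c + m)
    (x : Fin (a + n + b)) (hx₁ : a - (a - c) ≤ (x : ℕ)) (hx₂ : (x : ℕ) < a + n + (b - d)) :
    c ≤ (f x : ℕ) ∧ (f x : ℕ) < c + m := by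
  have hx := hf.val_le_val_apply x
  have hx' := hf.val_apply_add_le x
  rcases lt_or_ge (x : ℕ) a with hxa | hxa
  · have hfirst := hblock ⟨a, by omega⟩ le_rfl (by simp; omega)
    have := Fin.lt_def.1 (hf (show x < ⟨a, by omega⟩ from hxa))
    omega
  rcases lt_or_ge (x : ℕ) (a + n) with hxn | hxn
  · exact hblock x hxa hxn
  · have hlast := hblock ⟨a + n - 1, by omega⟩ (by simp; omega) (by simp; omega)
    have := Fin.lt_def.1 (hf (show (⟨a + n - 1, by omega⟩ : Fin (a + n + b)) < x from by
      rw [Fin.lt_def]; simp; omega))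
    omega

theorem NegativeP.contains_padP_tsub_of_contains_padP {θ τ : Pattern} {a b c d : ℕ}
    (hθ : NegativeP θ) (h : Contains (padP a θ b) (padP c τ d)) :
    Contains (padP (a - c) θ (b - d)) τ := by
  obtain ⟨f, hf : IsPatternEmbedding _ _ f⟩ := h
  have hflat := isPatternEmbedding_padP_padP (a - (a - c)) (a - c) (b - d) (b - (b - d))
    (p := θ) (a := a) (b := b) (by omega) (by omega)
  have hsize := padP_fst (a - c) θ (b - d)
  refine (hf.comp (hflat.comp (isPatternEmbedding_midPos _ _ _))).contains_of_mem_block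
    fun j => ?_
  refine hf.1.mapsTo_window (a := a) (n := θ.1) (b := b) (c := c) (m := τ.1) (d := d)
    (by have := hθ.1; omega) (hf.mem_block_of_negativeP hθ) _ ?_ ?_ <;>
    simp only [Function.comp_apply, Fin.val_cast, val_midPos] <;> omega

theorem contains_padP_of_contains_padP_tsub {p q : Pattern} {a b c d : ℕ}
    (h : Contains (padP (a - c) p (b - d)) q) : Contains (padP a p b) (padP c q d) :=
  (contains_padP_padP (a - (a - c)) (a - c) (b - d) (b - (b - d)) (by omega) (by omega)).trans
    (padP_mono (by omega) (by omega) h)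

theorem sum_monotone_contains_iff_general (θ τ : Pattern)
    (hθ : NegativeP θ) (a b c d : ℕ) :
    Contains (sumP (sumP (idPat a) θ) (idPat b)) (sumP (sumP (idPat c) τ) (idPat d)) ↔
      Contains (sumP (sumP (idPat (a - c)) θ) (idPat (b - d))) τ :=
  ⟨hθ.contains_padP_tsub_of_contains_padP, contains_padP_of_contains_padP_tsub⟩

/-- for negative θ, τ and nonnegative integers a,b,c,d,
`a ⊕ θ ⊕ b ≤ c ⊕ τ ⊕ d ↔ max(0,a−c) ⊕ θ ⊕ max(0,b−d) ≤ τ`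
(`a - c` below is truncated subtraction on ℕ, i.e. `max (0, a - c)`). -/
theorem sum_monotone_contains_iff (θ τ : Pattern)
    (hθ : NegativeP θ) (hτ : NegativeP τ) (a b c d : ℕ) :
    Contains (sumP (sumP (idPat a) θ) (idPat b)) (sumP (sumP (idPat c) τ) (idPat d)) ↔
      Contains (sumP (sumP (idPat (a - c)) θ) (idPat (b - d))) τ :=
  sum_monotone_contains_iff_general θ τ hθ a b c d
end

section
/- Every permutation π in the class X that is crossed (not monotone) and positive (begins with its minimum or ends with its maximum) admits a unique decomposition π = a ⊕ θ ⊕ b where a, b are non-negative integers with a + b > 0, a and b denote increasing permutations of those sizes, and θ ∈ X is negative (begins with its maximum or ends with its minimum). -/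
open Equiv Filter

/-!
Existence is by induction on the generation of `p` in `X`. A skew sum `1 ⊖ q` or `q ⊖ 1` is
never positive. If `p = 1 ⊕ q` (or `q ⊕ 1`), then either `q` is negative, which is already a
decomposition, or `q` is again crossed and positive, and the extra `1` is absorbed into the
increasing block `a` (or `b`) of its decomposition.

Uniqueness: a negative `θ` neither begins with its minimum nor ends with its maximum, so `a` is
the number of leading fixed points of `a ⊕ θ ⊕ b`, `b` the number of trailing ones, and `θ` is
then recovered by cancelling the increasing blocks.
-/

-- Out of range, `entry p i` is the junk value `0`.
def entry (p : Pattern) (i : ℕ) : ℕ := if h : i < p.1 then p.2 ⟨i, h⟩ else 0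

lemma entry_of_lt {p : Pattern} {i : ℕ} (h : i < p.1) : entry p i = p.2 ⟨i, h⟩ := dif_pos h

lemma entry_lt {p : Pattern} {i : ℕ} (h : i < p.1) : entry p i < p.1 := by
  rw [entry_of_lt h]; exact (p.2 _).isLt

lemma entry_inj {p : Pattern} {i j : ℕ} (hi : i < p.1) (hj : j < p.1) :
    entry p i = entry p j ↔ i = j := by
  rw [entry_of_lt hi, entry_of_lt hj, ← Fin.ext_iff, p.2.injective.eq_iff, Fin.mk.injEq]

lemma exists_entry_eq {p : Pattern} {j : ℕ} (hj : j < p.1) : ∃ i < p.1, entry p i = j :=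
  ⟨p.2.symm ⟨j, hj⟩, (p.2.symm _).isLt, by simp [entry_of_lt]⟩

lemma Pattern.ext_entry {p q : Pattern} (h : p.1 = q.1)
    (he : ∀ i < p.1, entry p i = entry q i) : p = q := by
  obtain ⟨n, σ⟩ := p
  obtain ⟨m, τ⟩ := q
  obtain rfl : n = m := h
  congr 1
  ext i
  simpa [entry_of_lt (p := ⟨n, σ⟩) i.isLt, entry_of_lt (p := ⟨n, τ⟩) i.isLt] using
    he i i.isLt

@[simp] lemma onePat_fst : onePat.1 = 1 := rfl
@[simp] lemma idPat_fst (k : ℕ) : (idPat k).1 = k := rfl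
@[simp] lemma sumP_fst (p q : Pattern) : (sumP p q).1 = p.1 + q.1 := rfl
@[simp] lemma skewP_fst (p q : Pattern) : (skewP p q).1 = p.1 + q.1 := rfl

lemma entry_idPat {k i : ℕ} (h : i < k) : entry (idPat k) i = i := by
  rw [entry_of_lt (p := idPat k) h]; rfl

lemma entry_sumP_of_lt (p q : Pattern) {i : ℕ} (h : i < p.1) :
    entry (sumP p q) i = entry p i := by
  rw [entry_of_lt (show i < (sumP p q).1 by simp; omega), entry_of_lt h]
  change (finSumFinEquiv ((p.2.sumCongr q.2)
    (finSumFinEquiv.symm (Fin.castAdd q.1 ⟨i, h⟩))) : ℕ) = _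
  rw [finSumFinEquiv_symm_apply_castAdd]
  simp

lemma entry_sumP_add (p q : Pattern) {j : ℕ} (h : j < q.1) :
    entry (sumP p q) (p.1 + j) = p.1 + entry q j := by
  rw [entry_of_lt (show p.1 + j < (sumP p q).1 by simp; omega), entry_of_lt h]
  change (finSumFinEquiv ((p.2.sumCongr q.2)
    (finSumFinEquiv.symm (Fin.natAdd p.1 ⟨j, h⟩))) : ℕ) = _
  rw [finSumFinEquiv_symm_apply_natAdd]
  simp

lemma entry_skewP_of_lt (p q : Pattern) {i : ℕ} (h : i < p.1) :
    entry (skewP p q) i = q.1 + entry p i := by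
  rw [entry_of_lt (show i < (skewP p q).1 by simp; omega), entry_of_lt h]
  change (finCongr (Nat.add_comm q.1 p.1) (finSumFinEquiv (Equiv.sumComm _ _
    ((p.2.sumCongr q.2) (finSumFinEquiv.symm (Fin.castAdd q.1 ⟨i, h⟩))))) : ℕ) = _
  rw [finSumFinEquiv_symm_apply_castAdd]
  simp [Nat.add_comm]

lemma entry_skewP_add (p q : Pattern) {j : ℕ} (h : j < q.1) :
    entry (skewP p q) (p.1 + j) = entry q j := by
  rw [entry_of_lt (show p.1 + j < (skewP p q).1 by simp; omega), entry_of_lt h]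
  change (finCongr (Nat.add_comm q.1 p.1) (finSumFinEquiv (Equiv.sumComm _ _
    ((p.2.sumCongr q.2) (finSumFinEquiv.symm (Fin.natAdd p.1 ⟨j, h⟩))))) : ℕ) = _
  rw [finSumFinEquiv_symm_apply_natAdd]
  simp

lemma sumP_assoc (p q r : Pattern) : sumP (sumP p q) r = sumP p (sumP q r) := by
  refine Pattern.ext_entry (by simp [Nat.add_assoc]) fun i hi => ?_
  simp only [sumP_fst] at hi
  by_cases h1 : i < p.1
  · rw [entry_sumP_of_lt _ _ (by simp; omega), entry_sumP_of_lt _ _ h1, entry_sumP_of_lt _ _ h1]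
  obtain ⟨j, rfl⟩ := Nat.exists_eq_add_of_le (not_lt.mp h1)
  rw [entry_sumP_add _ _ (by simp; omega)]
  by_cases h2 : j < q.1
  · rw [entry_sumP_of_lt _ _ (by simp; omega), entry_sumP_add _ _ h2, entry_sumP_of_lt _ _ h2]
  obtain ⟨k, rfl⟩ := Nat.exists_eq_add_of_le (not_lt.mp h2)
  rw [entry_sumP_add _ _ (by omega), ← Nat.add_assoc, ← Nat.add_assoc]
  exact entry_sumP_add (sumP p q) r (by omega)

lemma sumP_idPat_idPat (a b : ℕ) : sumP (idPat a) (idPat b) = idPat (a + b) := by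
  refine Pattern.ext_entry rfl fun i hi => ?_
  simp only [sumP_fst, idPat_fst] at hi
  rw [entry_idPat hi]
  by_cases h : i < a
  · rw [entry_sumP_of_lt _ _ h, entry_idPat h]
  · obtain ⟨j, rfl⟩ := Nat.exists_eq_add_of_le (not_lt.mp h)
    simpa [entry_idPat (show j < b by omega)] using
      entry_sumP_add (idPat a) (idPat b) (j := j) (by simp; omega)

lemma sumP_idPat_zero (p : Pattern) : sumP p (idPat 0) = p :=
  Pattern.ext_entry rfl fun _ hi => entry_sumP_of_lt _ _ hi

lemma idPat_zero_sumP (p : Pattern) : sumP (idPat 0) p = p :=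
  Pattern.ext_entry (Nat.zero_add _) fun i hi => by
    simpa using entry_sumP_add (idPat 0) p (j := i) (by simpa using hi)

lemma sumP_left_cancel {p q r : Pattern} (h : sumP p q = sumP p r) : q = r := by
  have hsz : p.1 + q.1 = p.1 + r.1 := congrArg Sigma.fst h
  refine Pattern.ext_entry (by omega) fun i hi => ?_
  have := congrArg (entry · (p.1 + i)) h
  rw [entry_sumP_add _ _ hi, entry_sumP_add _ _ (by omega)] at this
  omega

lemma beginsWithMin_iff {p : Pattern} : BeginsWithMin p ↔ 0 < p.1 ∧ entry p 0 = 0 :=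
  ⟨fun ⟨h, he⟩ => ⟨h, by rw [entry_of_lt h, he]⟩,
    fun ⟨h, he⟩ => ⟨h, Fin.ext (by rwa [entry_of_lt h] at he)⟩⟩

lemma endsWithMax_iff {p : Pattern} :
    EndsWithMax p ↔ 0 < p.1 ∧ entry p (p.1 - 1) = p.1 - 1 :=
  ⟨fun ⟨h, he⟩ => ⟨h, by rw [entry_of_lt (by omega), he]⟩,
    fun ⟨h, he⟩ => ⟨h, Fin.ext (by rwa [entry_of_lt (by omega)] at he)⟩⟩

lemma beginsWithMax_iff {p : Pattern} : BeginsWithMax p ↔ 0 < p.1 ∧ entry p 0 = p.1 - 1 :=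
  ⟨fun ⟨h, he⟩ => ⟨h, by rw [entry_of_lt h, he]⟩,
    fun ⟨h, he⟩ => ⟨h, Fin.ext (by rwa [entry_of_lt h] at he)⟩⟩

lemma endsWithMin_iff {p : Pattern} : EndsWithMin p ↔ 0 < p.1 ∧ entry p (p.1 - 1) = 0 :=
  ⟨fun ⟨h, he⟩ => ⟨h, by rw [entry_of_lt (by omega), he]⟩,
    fun ⟨h, he⟩ => ⟨h, Fin.ext (by rwa [entry_of_lt (by omega)] at he)⟩⟩

lemma beginsWithMin_sumP_iff {p q : Pattern} (hp : 0 < p.1) :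
    BeginsWithMin (sumP p q) ↔ BeginsWithMin p := by
  simp only [beginsWithMin_iff, entry_sumP_of_lt _ _ hp, sumP_fst]
  omega

lemma endsWithMax_sumP_iff {p q : Pattern} (hq : 0 < q.1) :
    EndsWithMax (sumP p q) ↔ EndsWithMax q := by
  have hlast : p.1 + q.1 - 1 = p.1 + (q.1 - 1) := by omega
  simp only [endsWithMax_iff, sumP_fst, hlast, entry_sumP_add _ _ (Nat.sub_one_lt_of_lt hq)]
  omega

lemma beginsWithMax_skewP_iff {p q : Pattern} (hp : 0 < p.1) :
    BeginsWithMax (skewP p q) ↔ BeginsWithMax p := by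
  simp only [beginsWithMax_iff, entry_skewP_of_lt _ _ hp, skewP_fst]
  omega

lemma endsWithMin_skewP_iff {p q : Pattern} (hq : 0 < q.1) :
    EndsWithMin (skewP p q) ↔ EndsWithMin q := by
  have hlast : p.1 + q.1 - 1 = p.1 + (q.1 - 1) := by omega
  simp only [endsWithMin_iff, skewP_fst, hlast, entry_skewP_add _ _ (Nat.sub_one_lt_of_lt hq)]
  omega

lemma not_positiveP_skewP {p q : Pattern} (hp : 0 < p.1) (hq : 0 < q.1) :
    ¬PositiveP (skewP p q) := by
  have hlast : p.1 + q.1 - 1 = p.1 + (q.1 - 1) := by omega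
  have hq_last := entry_lt (p := q) (Nat.sub_one_lt_of_lt hq)
  rintro ⟨-, h | h⟩
  · rw [beginsWithMin_iff, entry_skewP_of_lt _ _ hp] at h
    omega
  · rw [endsWithMax_iff, skewP_fst, hlast, entry_skewP_add _ _ (Nat.sub_one_lt_of_lt hq)] at h
    omega

lemma beginsWithMin_onePat : BeginsWithMin onePat := ⟨Nat.one_pos, rfl⟩
lemma endsWithMax_onePat : EndsWithMax onePat := ⟨Nat.one_pos, rfl⟩
lemma beginsWithMax_onePat : BeginsWithMax onePat := ⟨Nat.one_pos, rfl⟩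
lemma endsWithMin_onePat : EndsWithMin onePat := ⟨Nat.one_pos, rfl⟩

lemma NegativeP.not_beginsWithMin {p : Pattern} (hp : NegativeP p) : ¬BeginsWithMin p := by
  obtain ⟨h2, h | h⟩ := hp <;> rw [beginsWithMin_iff] <;> rintro ⟨-, h0⟩
  · rw [beginsWithMax_iff] at h
    omega
  · rw [endsWithMin_iff, ← h0, entry_inj (by omega) (by omega)] at h
    omega

lemma NegativeP.not_endsWithMax {p : Pattern} (hp : NegativeP p) : ¬EndsWithMax p := by
  obtain ⟨h2, h | h⟩ := hp <;> rw [endsWithMax_iff] <;> rintro ⟨-, h0⟩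
  · rw [beginsWithMax_iff, ← h0, entry_inj (by omega) (by omega)] at h
    omega
  · rw [endsWithMin_iff] at h
    omega

lemma isIncreasingP_iff {p : Pattern} : IsIncreasingP p ↔ p = idPat p.1 := by
  obtain ⟨n, σ⟩ := p
  refine ⟨fun h => ?_, fun h => ?_⟩
  · have hσ : StrictMono σ := Monotone.strictMono_of_injective (fun i j => h i j) σ.injective
    have hid : ⇑σ = id := (hσ.range_inj strictMono_id).mp (by simp [σ.range_eq_univ])
    change (⟨n, σ⟩ : Pattern) = ⟨n, 1⟩
    congr
    exact Equiv.ext (congrFun hid)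
  · rw [h]
    exact fun _ _ hij => hij

lemma isIncreasingP_of_le_one {p : Pattern} (h : p.1 ≤ 1) : IsIncreasingP p := by
  intro i j _
  rw [@Subsingleton.elim _ (Fin.subsingleton_iff_le_one.mpr h) i j]

lemma isIncreasingP_sumP {p q : Pattern} (hp : IsIncreasingP p) (hq : IsIncreasingP q) :
    IsIncreasingP (sumP p q) := by
  rw [isIncreasingP_iff] at hp hq ⊢
  rw [hp, hq, sumP_idPat_idPat]
  rfl

lemma IsDecreasingP.negativeP {p : Pattern} (h : IsDecreasingP p) (h2 : 2 ≤ p.1) :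
    NegativeP p := by
  have h0 : 0 < p.1 := by omega
  obtain ⟨i, hi, hmax⟩ := exists_entry_eq (p := p) (j := p.1 - 1) (by omega)
  have hle : entry p i ≤ entry p 0 := by
    rw [entry_of_lt hi, entry_of_lt h0]
    exact h ⟨0, h0⟩ ⟨i, hi⟩ (Fin.mk_le_mk.mpr (Nat.zero_le i))
  have := entry_lt h0
  exact ⟨h2, Or.inl (beginsWithMax_iff.mpr ⟨h0, by omega⟩)⟩

lemma idPat_sumP_inj {a a' : ℕ} {r r' : Pattern} (hr : ¬BeginsWithMin r)
    (hr' : ¬BeginsWithMin r') (h : sumP (idPat a) r = sumP (idPat a') r') : a = a' ∧ r = r' := by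
  -- Position `a` is the first one that is not a fixed point.
  have key : ∀ {a a' : ℕ} {r r' : Pattern}, ¬BeginsWithMin r' →
      sumP (idPat a) r = sumP (idPat a') r' → ¬a' < a := by
    intro a a' r r' hr' h hlt
    have hsz : a + r.1 = a' + r'.1 := congrArg Sigma.fst h
    have e : entry (sumP (idPat a) r) a' = a' := by
      rw [entry_sumP_of_lt _ _ (by simpa using hlt), entry_idPat hlt]
    have e' : entry (sumP (idPat a') r') a' = a' + entry r' 0 := by
      simpa using entry_sumP_add (idPat a') r' (j := 0) (by omega)
    rw [h, e'] at e
    exact hr' (beginsWithMin_iff.mpr ⟨by omega, by omega⟩)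
  obtain rfl : a = a' := le_antisymm (not_lt.mp (key hr' h)) (not_lt.mp (key hr h.symm))
  exact ⟨rfl, sumP_left_cancel h⟩

lemma sumP_idPat_inj {r r' : Pattern} {b b' : ℕ} (hr : ¬EndsWithMax r)
    (hr' : ¬EndsWithMax r') (h : sumP r (idPat b) = sumP r' (idPat b')) : r = r' ∧ b = b' := by
  have key : ∀ {r r' : Pattern} {b b' : ℕ}, ¬EndsWithMax r →
      sumP r (idPat b) = sumP r' (idPat b') → ¬b < b' := by
    intro r r' b b' hr h hlt
    have hsz : r.1 + b = r'.1 + b' := congrArg Sigma.fst h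
    have e : entry (sumP r (idPat b)) (r.1 - 1) = entry r (r.1 - 1) :=
      entry_sumP_of_lt _ _ (by omega)
    have e' : entry (sumP r' (idPat b')) (r.1 - 1) = r.1 - 1 := by
      obtain ⟨k, hk⟩ : ∃ k, r.1 - 1 = r'.1 + k := ⟨r.1 - 1 - r'.1, by omega⟩
      rw [hk, entry_sumP_add _ _ (by simp; omega), entry_idPat (by omega)]
    rw [h, e'] at e
    exact hr (endsWithMax_iff.mpr ⟨by omega, by omega⟩)
  obtain rfl : b = b' := le_antisymm (not_lt.mp (key hr' h.symm)) (not_lt.mp (key hr h))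
  have hsz : r.1 = r'.1 := by simpa using congrArg Sigma.fst h
  refine ⟨Pattern.ext_entry hsz fun i hi => ?_, rfl⟩
  rw [← entry_sumP_of_lt r (idPat b) hi, h, entry_sumP_of_lt _ _ (hsz ▸ hi)]

lemma sumP_sumP_idPat_inj {a a' b b' : ℕ} {θ θ' : Pattern} (hθ : NegativeP θ)
    (hθ' : NegativeP θ')
    (h : sumP (sumP (idPat a) θ) (idPat b) = sumP (sumP (idPat a') θ') (idPat b')) :
    a = a' ∧ b = b' ∧ θ = θ' := by
  have hθ_end : ¬EndsWithMax (sumP (idPat a) θ) := by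
    rw [endsWithMax_sumP_iff (by have := hθ.1; omega)]
    exact hθ.not_endsWithMax
  have hθ'_end : ¬EndsWithMax (sumP (idPat a') θ') := by
    rw [endsWithMax_sumP_iff (by have := hθ'.1; omega)]
    exact hθ'.not_endsWithMax
  obtain ⟨h_mid, rfl⟩ := sumP_idPat_inj hθ_end hθ'_end h
  obtain ⟨rfl, rfl⟩ := idPat_sumP_inj hθ.not_beginsWithMin hθ'.not_beginsWithMin h_mid
  exact ⟨rfl, rfl, rfl⟩

namespace InX

lemma pos {p : Pattern} (hX : InX p) : 0 < p.1 := by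
  induction hX <;> simp only [onePat_fst, sumP_fst, skewP_fst] <;> omega

lemma positiveP_or_negativeP {p : Pattern} (hX : InX p) (h2 : 2 ≤ p.1) :
    PositiveP p ∨ NegativeP p := by
  cases hX with
  | base => simp at h2
  | sumL => exact .inl ⟨h2, .inl ((beginsWithMin_sumP_iff Nat.one_pos).2 beginsWithMin_onePat)⟩
  | skewL =>
    exact .inr ⟨h2, .inl ((beginsWithMax_skewP_iff Nat.one_pos).2 beginsWithMax_onePat)⟩
  | sumR => exact .inl ⟨h2, .inr ((endsWithMax_sumP_iff Nat.one_pos).2 endsWithMax_onePat)⟩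
  | skewR => exact .inr ⟨h2, .inr ((endsWithMin_skewP_iff Nat.one_pos).2 endsWithMin_onePat)⟩

lemma crossedP_and_positiveP {p : Pattern} (hX : InX p) (hinc : ¬IsIncreasingP p)
    (hneg : ¬NegativeP p) : CrossedP p ∧ PositiveP p := by
  have h2 : 2 ≤ p.1 := by
    by_contra h
    exact hinc (isIncreasingP_of_le_one (by omega))
  refine ⟨?_, (hX.positiveP_or_negativeP h2).resolve_right hneg⟩
  rintro (h | h)
  exacts [hinc h, hneg (h.negativeP h2)]

lemma exists_decomposition {p : Pattern} (hX : InX p) (hc : CrossedP p)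
    (hp : PositiveP p) :
    ∃ a b θ, 0 < a + b ∧ InX θ ∧ NegativeP θ ∧
      p = sumP (sumP (idPat a) θ) (idPat b) := by
  induction hX with
  | base => exact absurd (.inl (isIncreasingP_of_le_one le_rfl)) hc
  | @sumL q hq ih =>
    by_cases hneg : NegativeP q
    · exact ⟨1, 0, q, Nat.one_pos, hq, hneg, (sumP_idPat_zero _).symm⟩
    have hinc : ¬IsIncreasingP q := fun h =>
      hc (.inl (isIncreasingP_sumP (isIncreasingP_of_le_one le_rfl) h))
    obtain ⟨hcq, hpq⟩ := hq.crossedP_and_positiveP hinc hneg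
    obtain ⟨a, b, θ, hab, hθX, hθ, rfl⟩ := ih hcq hpq
    refine ⟨1 + a, b, θ, by omega, hθX, hθ, ?_⟩
    rw [← sumP_idPat_idPat]
    simp only [sumP_assoc]
    rfl
  | @sumR q hq ih =>
    by_cases hneg : NegativeP q
    · exact ⟨0, 1, q, Nat.one_pos, hq, hneg, by rw [idPat_zero_sumP]; rfl⟩
    have hinc : ¬IsIncreasingP q := fun h =>
      hc (.inl (isIncreasingP_sumP h (isIncreasingP_of_le_one le_rfl)))
    obtain ⟨hcq, hpq⟩ := hq.crossedP_and_positiveP hinc hneg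
    obtain ⟨a, b, θ, hab, hθX, hθ, rfl⟩ := ih hcq hpq
    refine ⟨a, b + 1, θ, by omega, hθX, hθ, ?_⟩
    rw [← sumP_idPat_idPat, sumP_assoc]
    rfl
  | skewL hq => exact absurd hp (not_positiveP_skewP Nat.one_pos hq.pos)
  | skewR hq => exact absurd hp (not_positiveP_skewP hq.pos Nat.one_pos)

end InX

/-- every crossed positive element of X decomposes uniquely as
`a ⊕ θ ⊕ b` with `a + b > 0` and θ ∈ X negative. -/
theorem crossed_positive_unique_decomposition (p : Pattern)
    (hX : InX p) (hc : CrossedP p) (hp : PositiveP p) :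
    ∃! x : ℕ × ℕ × Pattern,
      0 < x.1 + x.2.1 ∧ InX x.2.2 ∧ NegativeP x.2.2 ∧
        p = sumP (sumP (idPat x.1) x.2.2) (idPat x.2.1) := by
  obtain ⟨a, b, θ, hab, hθX, hθ, rfl⟩ := hX.exists_decomposition hc hp
  refine ⟨(a, b, θ), ⟨hab, hθX, hθ, rfl⟩, ?_⟩
  rintro ⟨a', b', θ'⟩ ⟨-, -, hθ', h⟩
  obtain ⟨rfl, rfl, rfl⟩ := sumP_sumP_idPat_inj hθ' hθ h.symm
  rfl
end

section
/- A permutation π belongs to the closure of {1} under the operations π ↦ 1 ⊕ π, 1 ⊖ π, π ⊕ 1, π ⊖ 1 if and only if π avoids all four of the patterns 2143, 2413, 3142, 3412. -/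
open Equiv Filter

def p2143 : Equiv.Perm (Fin 4) := ⟨![1, 0, 3, 2], ![1, 0, 3, 2], by decide, by decide⟩
def p2413 : Equiv.Perm (Fin 4) := ⟨![1, 3, 0, 2], ![2, 0, 3, 1], by decide, by decide⟩
def p3142 : Equiv.Perm (Fin 4) := ⟨![2, 0, 3, 1], ![1, 3, 0, 2], by decide, by decide⟩
def p3412 : Equiv.Perm (Fin 4) := ⟨![2, 3, 0, 1], ![2, 3, 0, 1], by decide, by decide⟩


section vals
variable {n : ℕ} (τ : Equiv.Perm (Fin n))

lemma symmL (i : Fin (1+n)) (h : (i:ℕ) = 0) : finSumFinEquiv.symm i = Sum.inl (0 : Fin 1) := by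
  rw [Equiv.symm_apply_eq]; exact Fin.ext (by simp [h])

lemma symmR (i : Fin (1+n)) (j : Fin n) (h : (i:ℕ) = (j:ℕ) + 1) :
    finSumFinEquiv.symm i = Sum.inr j := by
  rw [Equiv.symm_apply_eq]; exact Fin.ext (by simp [h, Nat.add_comm])

lemma symmL' (i : Fin (n+1)) (j : Fin n) (h : (i:ℕ) = (j:ℕ)) :
    finSumFinEquiv.symm i = Sum.inl j := by
  rw [Equiv.symm_apply_eq]; exact Fin.ext (by simp [h])

lemma symmR' (i : Fin (n+1)) (h : (i:ℕ) = n) : finSumFinEquiv.symm i = Sum.inr (0 : Fin 1) := by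
  rw [Equiv.symm_apply_eq]; exact Fin.ext (by simp [h])

lemma val1a (i : Fin (1+n)) (h : (i:ℕ) = 0) : ((sumPerm 1 τ) i : ℕ) = 0 := by
  unfold sumPerm; simp only [trans_apply, symmL i h]; simp
lemma val1b (i : Fin (1+n)) (j : Fin n) (h : (i:ℕ) = (j:ℕ) + 1) :
    ((sumPerm 1 τ) i : ℕ) = (τ j : ℕ) + 1 := by
  unfold sumPerm; simp only [trans_apply, symmR i j h]; simp [Nat.add_comm]
lemma val2a (i : Fin (1+n)) (h : (i:ℕ) = 0) : ((skewPerm 1 τ) i : ℕ) = n := by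
  unfold skewPerm; simp only [trans_apply, symmL i h]; simp
lemma val2b (i : Fin (1+n)) (j : Fin n) (h : (i:ℕ) = (j:ℕ) + 1) :
    ((skewPerm 1 τ) i : ℕ) = (τ j : ℕ) := by
  unfold skewPerm; simp only [trans_apply, symmR i j h]; simp
lemma val3a (i : Fin (n+1)) (h : (i:ℕ) = n) : ((sumPerm τ 1) i : ℕ) = n := by
  unfold sumPerm; simp only [trans_apply, symmR' i h]; simp
lemma val3b (i : Fin (n+1)) (j : Fin n) (h : (i:ℕ) = (j:ℕ)) :
    ((sumPerm τ 1) i : ℕ) = (τ j : ℕ) := by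
  unfold sumPerm; simp only [trans_apply, symmL' i j h]; simp
lemma val4a (i : Fin (n+1)) (h : (i:ℕ) = n) : ((skewPerm τ 1) i : ℕ) = 0 := by
  unfold skewPerm; simp only [trans_apply, symmR' i h]; simp
lemma val4b (i : Fin (n+1)) (j : Fin n) (h : (i:ℕ) = (j:ℕ)) :
    ((skewPerm τ 1) i : ℕ) = (τ j : ℕ) + 1 := by
  unfold skewPerm; simp only [trans_apply, symmL' i j h]; simp [Nat.add_comm]
end vals

lemma pat_ext {m n : ℕ} (h : m = n) {σ : Equiv.Perm (Fin m)} {τ : Equiv.Perm (Fin n)}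
    (hv : ∀ i : Fin m, (σ i : ℕ) = (τ (Fin.cast h i) : ℕ)) :
    (⟨m, σ⟩ : Pattern) = ⟨n, τ⟩ := by
  subst h
  simp only [Sigma.mk.inj_iff, heq_eq_eq, true_and]
  exact Equiv.ext fun i => Fin.ext (by simpa using hv i)

lemma contains_trans {p q r : Pattern} (h1 : Contains p q) (h2 : Contains q r) :
    Contains p r := by
  obtain ⟨f, hf, hof⟩ := h1
  obtain ⟨g, hg, hog⟩ := h2
  exact ⟨g ∘ f, hg.comp hf, fun s t => (hof s t).trans (hog (f s) (f t))⟩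

section fwd
variable (P : Equiv.Perm (Fin 4)) {n : ℕ} (τ : Equiv.Perm (Fin n))

lemma fwd_sumL (t₀ : Fin 4) (ht : P t₀ < P 0)
    (h : ¬ Contains ⟨4, P⟩ ⟨n, τ⟩) : ¬ Contains ⟨4, P⟩ ⟨1 + n, sumPerm 1 τ⟩ := by
  rintro ⟨f, hf, ho⟩
  dsimp only at f hf ho
  by_cases h0 : ((f 0 : Fin (1+n)) : ℕ) = 0
  · have h2 := (ho t₀ 0).mp ht
    rw [Fin.lt_def, val1a τ (f 0) h0] at h2
    omega
  · have hall : ∀ i : Fin 4, 1 ≤ ((f i : Fin (1+n)) : ℕ) := by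
      intro i
      have h1 := hf.monotone (Fin.zero_le i)
      rw [Fin.le_def] at h1
      omega
    have hlt : ∀ i : Fin 4, ((f i : Fin (1+n)) : ℕ) < 1 + n := fun i => (f i).isLt
    refine h ⟨fun i => ⟨(f i : ℕ) - 1, by have := hlt i; have := hall i; show (f i : ℕ) - 1 < n; omega⟩, ?_, ?_⟩
    · intro s t hst
      have h3 := hf hst
      rw [Fin.lt_def] at h3
      rw [Fin.mk_lt_mk]
      have := hall s
      omega
    · intro s t
      dsimp only
      have es : ((f s : Fin (1+n)) : ℕ) = ((f s : ℕ) - 1) + 1 := by have := hall s; omega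
      have et : ((f t : Fin (1+n)) : ℕ) = ((f t : ℕ) - 1) + 1 := by have := hall t; omega
      rw [ho s t, Fin.lt_def, Fin.lt_def,
        val1b τ (f s) ⟨(f s : ℕ) - 1, by have := hlt s; have := hall s; omega⟩ es,
        val1b τ (f t) ⟨(f t : ℕ) - 1, by have := hlt t; have := hall t; omega⟩ et]
      omega

lemma fwd_skewL (t₀ : Fin 4) (ht : P 0 < P t₀)
    (h : ¬ Contains ⟨4, P⟩ ⟨n, τ⟩) : ¬ Contains ⟨4, P⟩ ⟨1 + n, skewPerm 1 τ⟩ := by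
  rintro ⟨f, hf, ho⟩
  dsimp only at f hf ho
  by_cases h0 : ((f 0 : Fin (1+n)) : ℕ) = 0
  · have h2 := (ho 0 t₀).mp ht
    rw [Fin.lt_def, val2a τ (f 0) h0] at h2
    have h3 : ((skewPerm 1 τ) (f t₀) : ℕ) < 1 + n := Fin.isLt _
    omega
  · have hall : ∀ i : Fin 4, 1 ≤ ((f i : Fin (1+n)) : ℕ) := by
      intro i
      have h1 := hf.monotone (Fin.zero_le i)
      rw [Fin.le_def] at h1
      omega
    have hlt : ∀ i : Fin 4, ((f i : Fin (1+n)) : ℕ) < 1 + n := fun i => (f i).isLt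
    refine h ⟨fun i => ⟨(f i : ℕ) - 1, by have := hlt i; have := hall i; show (f i : ℕ) - 1 < n; omega⟩, ?_, ?_⟩
    · intro s t hst
      have h3 := hf hst
      rw [Fin.lt_def] at h3
      rw [Fin.mk_lt_mk]
      have := hall s
      omega
    · intro s t
      dsimp only
      have es : ((f s : Fin (1+n)) : ℕ) = ((f s : ℕ) - 1) + 1 := by have := hall s; omega
      have et : ((f t : Fin (1+n)) : ℕ) = ((f t : ℕ) - 1) + 1 := by have := hall t; omega
      rw [ho s t, Fin.lt_def, Fin.lt_def,
        val2b τ (f s) ⟨(f s : ℕ) - 1, by have := hlt s; have := hall s; omega⟩ es,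
        val2b τ (f t) ⟨(f t : ℕ) - 1, by have := hlt t; have := hall t; omega⟩ et]

lemma fwd_sumR (t₀ : Fin 4) (ht : P 3 < P t₀)
    (h : ¬ Contains ⟨4, P⟩ ⟨n, τ⟩) : ¬ Contains ⟨4, P⟩ ⟨n + 1, sumPerm τ 1⟩ := by
  rintro ⟨f, hf, ho⟩
  dsimp only at f hf ho
  by_cases h0 : ((f 3 : Fin (n+1)) : ℕ) = n
  · have h2 := (ho 3 t₀).mp ht
    rw [Fin.lt_def, val3a τ (f 3) h0] at h2
    have h3 : ((sumPerm τ 1) (f t₀) : ℕ) < n + 1 := Fin.isLt _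
    omega
  · have hall : ∀ i : Fin 4, ((f i : Fin (n+1)) : ℕ) < n := by
      intro i
      have h1 : i ≤ (3 : Fin 4) := by rw [Fin.le_def]; have := i.isLt; omega
      have h2 := hf.monotone h1
      rw [Fin.le_def] at h2
      have h3 : ((f 3 : Fin (n+1)) : ℕ) < n + 1 := (f 3).isLt
      omega
    refine h ⟨fun i => ⟨(f i : ℕ), hall i⟩, ?_, ?_⟩
    · intro s t hst
      have h3 := hf hst
      rw [Fin.lt_def] at h3
      rw [Fin.mk_lt_mk]
      omega
    · intro s t
      dsimp only
      rw [ho s t, Fin.lt_def, Fin.lt_def,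
        val3b τ (f s) ⟨(f s : ℕ), hall s⟩ rfl,
        val3b τ (f t) ⟨(f t : ℕ), hall t⟩ rfl]

lemma fwd_skewR (t₀ : Fin 4) (ht : P t₀ < P 3)
    (h : ¬ Contains ⟨4, P⟩ ⟨n, τ⟩) : ¬ Contains ⟨4, P⟩ ⟨n + 1, skewPerm τ 1⟩ := by
  rintro ⟨f, hf, ho⟩
  dsimp only at f hf ho
  by_cases h0 : ((f 3 : Fin (n+1)) : ℕ) = n
  · have h2 := (ho t₀ 3).mp ht
    rw [Fin.lt_def, val4a τ (f 3) h0] at h2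
    omega
  · have hall : ∀ i : Fin 4, ((f i : Fin (n+1)) : ℕ) < n := by
      intro i
      have h1 : i ≤ (3 : Fin 4) := by rw [Fin.le_def]; have := i.isLt; omega
      have h2 := hf.monotone h1
      rw [Fin.le_def] at h2
      have h3 : ((f 3 : Fin (n+1)) : ℕ) < n + 1 := (f 3).isLt
      omega
    refine h ⟨fun i => ⟨(f i : ℕ), hall i⟩, ?_, ?_⟩
    · intro s t hst
      have h3 := hf hst
      rw [Fin.lt_def] at h3
      rw [Fin.mk_lt_mk]
      omega
    · intro s t
      dsimp only
      rw [ho s t, Fin.lt_def, Fin.lt_def,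
        val4b τ (f s) ⟨(f s : ℕ), hall s⟩ rfl,
        val4b τ (f t) ⟨(f t : ℕ), hall t⟩ rfl]
      omega
end fwd

theorem Equiv.Perm.apply_inv_self {α : Type*} (f : Equiv.Perm α) (x : α) : f (f⁻¹ x) = x :=
  f.apply_symm_apply x

theorem Equiv.Perm.inv_apply_self {α : Type*} (f : Equiv.Perm α) (x : α) : f⁻¹ (f x) = x :=
  f.symm_apply_apply x

set_option maxHeartbeats 2000000 in
lemma structural {n : ℕ} (σ : Equiv.Perm (Fin (n+2)))
    (h1 : ¬ Contains ⟨4, p2143⟩ ⟨n+2, σ⟩) (h2 : ¬ Contains ⟨4, p2413⟩ ⟨n+2, σ⟩)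
    (h3 : ¬ Contains ⟨4, p3142⟩ ⟨n+2, σ⟩) (h4 : ¬ Contains ⟨4, p3412⟩ ⟨n+2, σ⟩) :
    (σ 0 : ℕ) = 0 ∨ (σ 0 : ℕ) = n+1 ∨ (σ (Fin.last (n+1)) : ℕ) = n+1 ∨
      (σ (Fin.last (n+1)) : ℕ) = 0 := by
  by_contra hc
  push_neg at hc
  obtain ⟨ha0, haL, hbL, hb0⟩ := hc
  have hσi : (σ (σ⁻¹ 0) : ℕ) = 0 := by rw [Equiv.Perm.apply_inv_self]; rfl
  have hσj : (σ (σ⁻¹ (Fin.last (n+1))) : ℕ) = n+1 := by rw [Equiv.Perm.apply_inv_self]; rfl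
  obtain ⟨i, hσi⟩ : ∃ i : Fin (n+2), (σ i : ℕ) = 0 := ⟨_, hσi⟩
  obtain ⟨j, hσj⟩ : ∃ j : Fin (n+2), (σ j : ℕ) = n+1 := ⟨_, hσj⟩
  have hi0 : 0 < (i : ℕ) := by
    rcases Nat.eq_zero_or_pos (i : ℕ) with h | h
    · exact absurd (by rw [← show (0 : Fin (n+2)) = i from Fin.ext h.symm] at hσi; exact hσi) ha0
    · exact h
  have hj0 : 0 < (j : ℕ) := by
    rcases Nat.eq_zero_or_pos (j : ℕ) with h | h
    · exact absurd (by rw [← show (0 : Fin (n+2)) = j from Fin.ext h.symm] at hσj; exact hσj) haL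
    · exact h
  have hiL : (i : ℕ) < n+1 := by
    rcases Nat.lt_or_ge (i : ℕ) (n+1) with h | h
    · exact h
    · have : (i : ℕ) = n+1 := by have := i.isLt; omega
      exact absurd (by rw [← show Fin.last (n+1) = i from Fin.ext this.symm] at hσi; exact hσi) hb0
  have hjL : (j : ℕ) < n+1 := by
    rcases Nat.lt_or_ge (j : ℕ) (n+1) with h | h
    · exact h
    · have : (j : ℕ) = n+1 := by have := j.isLt; omega
      exact absurd (by rw [← show Fin.last (n+1) = j from Fin.ext this.symm] at hσj; exact hσj) hbL
  have hij : (i : ℕ) ≠ (j : ℕ) := fun he => by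
    rw [show i = j from Fin.ext he, hσj] at hσi; omega
  have hav : (σ 0 : ℕ) < n+2 := (σ 0).isLt
  have hbv : (σ (Fin.last (n+1)) : ℕ) < n+2 := (σ (Fin.last (n+1))).isLt
  have hane : (σ 0 : ℕ) ≠ (σ (Fin.last (n+1)) : ℕ) := fun he => by
    have h5 : (0 : Fin (n+2)) = Fin.last (n+1) := σ.injective (Fin.ext he)
    have := congrArg Fin.val h5
    simp [Fin.val_last] at this
  have hai : (σ 0 : ℕ) ≠ 0 := ha0
  have hbi : (σ (Fin.last (n+1)) : ℕ) ≠ 0 := hb0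
  have haj : (σ 0 : ℕ) ≠ n+1 := haL
  have hbj : (σ (Fin.last (n+1)) : ℕ) ≠ n+1 := hbL
  rcases Nat.lt_or_ge (σ 0 : ℕ) (σ (Fin.last (n+1)) : ℕ) with hab | hab <;>
    rcases Nat.lt_or_ge (i : ℕ) (j : ℕ) with hij2 | hij2
  · refine h1 ⟨![0, i, j, Fin.last (n+1)], ?_, ?_⟩ <;>
    · have V0 : (![0, i, j, Fin.last (n+1)] : Fin 4 → Fin (n+2)) ⟨0, by omega⟩ = 0 := rfl
      have V1 : (![0, i, j, Fin.last (n+1)] : Fin 4 → Fin (n+2)) ⟨1, by omega⟩ = i := rfl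
      have V2 : (![0, i, j, Fin.last (n+1)] : Fin 4 → Fin (n+2)) ⟨2, by omega⟩ = j := rfl
      have V3 : (![0, i, j, Fin.last (n+1)] : Fin 4 → Fin (n+2)) ⟨3, by omega⟩ = Fin.last (n+1) := rfl
      have W0 : ((p2143 ⟨0, by omega⟩ : Fin 4) : ℕ) = 1 := rfl
      have W1 : ((p2143 ⟨1, by omega⟩ : Fin 4) : ℕ) = 0 := rfl
      have W2 : ((p2143 ⟨2, by omega⟩ : Fin 4) : ℕ) = 3 := rfl
      have W3 : ((p2143 ⟨3, by omega⟩ : Fin 4) : ℕ) = 2 := rfl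
      first
      | (intro s t hst
         fin_cases s <;> fin_cases t <;>
           simp only [V0, V1, V2, V3, Fin.lt_def, Fin.val_zero, Fin.val_last, Fin.mk_lt_mk] at hst ⊢ <;>
           omega)
      | (intro s t
         fin_cases s <;> fin_cases t <;>
           simp only [V0, V1, V2, V3, Fin.lt_def, Fin.val_zero, Fin.val_last, W0, W1, W2, W3] <;>
           omega)
  · refine h2 ⟨![0, j, i, Fin.last (n+1)], ?_, ?_⟩ <;>
    · have V0 : (![0, j, i, Fin.last (n+1)] : Fin 4 → Fin (n+2)) ⟨0, by omega⟩ = 0 := rfl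
      have V1 : (![0, j, i, Fin.last (n+1)] : Fin 4 → Fin (n+2)) ⟨1, by omega⟩ = j := rfl
      have V2 : (![0, j, i, Fin.last (n+1)] : Fin 4 → Fin (n+2)) ⟨2, by omega⟩ = i := rfl
      have V3 : (![0, j, i, Fin.last (n+1)] : Fin 4 → Fin (n+2)) ⟨3, by omega⟩ = Fin.last (n+1) := rfl
      have W0 : ((p2413 ⟨0, by omega⟩ : Fin 4) : ℕ) = 1 := rfl
      have W1 : ((p2413 ⟨1, by omega⟩ : Fin 4) : ℕ) = 3 := rfl
      have W2 : ((p2413 ⟨2, by omega⟩ : Fin 4) : ℕ) = 0 := rfl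
      have W3 : ((p2413 ⟨3, by omega⟩ : Fin 4) : ℕ) = 2 := rfl
      first
      | (intro s t hst
         fin_cases s <;> fin_cases t <;>
           simp only [V0, V1, V2, V3, Fin.lt_def, Fin.val_zero, Fin.val_last, Fin.mk_lt_mk] at hst ⊢ <;>
           omega)
      | (intro s t
         fin_cases s <;> fin_cases t <;>
           simp only [V0, V1, V2, V3, Fin.lt_def, Fin.val_zero, Fin.val_last, W0, W1, W2, W3] <;>
           omega)
  · refine h3 ⟨![0, i, j, Fin.last (n+1)], ?_, ?_⟩ <;>
    · have V0 : (![0, i, j, Fin.last (n+1)] : Fin 4 → Fin (n+2)) ⟨0, by omega⟩ = 0 := rfl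
      have V1 : (![0, i, j, Fin.last (n+1)] : Fin 4 → Fin (n+2)) ⟨1, by omega⟩ = i := rfl
      have V2 : (![0, i, j, Fin.last (n+1)] : Fin 4 → Fin (n+2)) ⟨2, by omega⟩ = j := rfl
      have V3 : (![0, i, j, Fin.last (n+1)] : Fin 4 → Fin (n+2)) ⟨3, by omega⟩ = Fin.last (n+1) := rfl
      have W0 : ((p3142 ⟨0, by omega⟩ : Fin 4) : ℕ) = 2 := rfl
      have W1 : ((p3142 ⟨1, by omega⟩ : Fin 4) : ℕ) = 0 := rfl
      have W2 : ((p3142 ⟨2, by omega⟩ : Fin 4) : ℕ) = 3 := rfl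
      have W3 : ((p3142 ⟨3, by omega⟩ : Fin 4) : ℕ) = 1 := rfl
      first
      | (intro s t hst
         fin_cases s <;> fin_cases t <;>
           simp only [V0, V1, V2, V3, Fin.lt_def, Fin.val_zero, Fin.val_last, Fin.mk_lt_mk] at hst ⊢ <;>
           omega)
      | (intro s t
         fin_cases s <;> fin_cases t <;>
           simp only [V0, V1, V2, V3, Fin.lt_def, Fin.val_zero, Fin.val_last, W0, W1, W2, W3] <;>
           omega)
  · refine h4 ⟨![0, j, i, Fin.last (n+1)], ?_, ?_⟩ <;>
    · have V0 : (![0, j, i, Fin.last (n+1)] : Fin 4 → Fin (n+2)) ⟨0, by omega⟩ = 0 := rfl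
      have V1 : (![0, j, i, Fin.last (n+1)] : Fin 4 → Fin (n+2)) ⟨1, by omega⟩ = j := rfl
      have V2 : (![0, j, i, Fin.last (n+1)] : Fin 4 → Fin (n+2)) ⟨2, by omega⟩ = i := rfl
      have V3 : (![0, j, i, Fin.last (n+1)] : Fin 4 → Fin (n+2)) ⟨3, by omega⟩ = Fin.last (n+1) := rfl
      have W0 : ((p3412 ⟨0, by omega⟩ : Fin 4) : ℕ) = 2 := rfl
      have W1 : ((p3412 ⟨1, by omega⟩ : Fin 4) : ℕ) = 3 := rfl
      have W2 : ((p3412 ⟨2, by omega⟩ : Fin 4) : ℕ) = 0 := rfl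
      have W3 : ((p3412 ⟨3, by omega⟩ : Fin 4) : ℕ) = 1 := rfl
      first
      | (intro s t hst
         fin_cases s <;> fin_cases t <;>
           simp only [V0, V1, V2, V3, Fin.lt_def, Fin.val_zero, Fin.val_last, Fin.mk_lt_mk] at hst ⊢ <;>
           omega)
      | (intro s t
         fin_cases s <;> fin_cases t <;>
           simp only [V0, V1, V2, V3, Fin.lt_def, Fin.val_zero, Fin.val_last, W0, W1, W2, W3] <;>
           omega)

lemma decompA {m : ℕ} (σ : Equiv.Perm (Fin (m+1))) (h0 : (σ 0 : ℕ) = 0) :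
    ∃ τ : Equiv.Perm (Fin m), (⟨m+1, σ⟩ : Pattern) = ⟨1+m, sumPerm 1 τ⟩ ∧
      Contains ⟨m, τ⟩ ⟨m+1, σ⟩ := by
  have key : ∀ k : Fin (m+1), (k : ℕ) ≠ 0 → 1 ≤ (σ k : ℕ) := by
    intro k hk
    rcases Nat.eq_zero_or_pos (σ k : ℕ) with h | h
    · exfalso
      have : σ k = σ 0 := Fin.ext (by rw [h0]; exact h)
      exact hk (congrArg Fin.val (σ.injective this))
    · exact h
  have keyinv : ∀ k : Fin (m+1), (k : ℕ) ≠ 0 → 1 ≤ (σ⁻¹ k : ℕ) := by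
    intro k hk
    rcases Nat.eq_zero_or_pos (σ⁻¹ k : ℕ) with h | h
    · exfalso
      have h2 : σ⁻¹ k = 0 := Fin.ext h
      have := congrArg σ h2
      rw [Equiv.Perm.apply_inv_self] at this
      exact hk (by rw [this, h0])
    · exact h
  obtain ⟨τ, hτ⟩ : ∃ τ : Equiv.Perm (Fin m),
      ∀ i : Fin m, (τ i : ℕ) = (σ ⟨(i:ℕ)+1, by omega⟩ : ℕ) - 1 := by
    refine ⟨⟨fun i => ⟨(σ ⟨(i:ℕ)+1, by omega⟩ : ℕ) - 1, by
        have h1 := (σ ⟨(i:ℕ)+1, by omega⟩).isLt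
        have h2 := key ⟨(i:ℕ)+1, by omega⟩ (by simp)
        omega⟩,
      fun i => ⟨(σ⁻¹ ⟨(i:ℕ)+1, by omega⟩ : ℕ) - 1, by
        have h1 := (σ⁻¹ ⟨(i:ℕ)+1, by omega⟩).isLt
        have h2 := keyinv ⟨(i:ℕ)+1, by omega⟩ (by simp)
        omega⟩, ?_, ?_⟩, fun i => rfl⟩
    · intro i
      apply Fin.ext
      simp only
      have h2 := key ⟨(i:ℕ)+1, by omega⟩ (by simp)
      have e1 : (⟨(σ ⟨(i:ℕ)+1, by omega⟩ : ℕ) - 1 + 1, by omega⟩ : Fin (m+1)) = σ ⟨(i:ℕ)+1, by omega⟩ :=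
        Fin.ext (by simp only; omega)
      rw [e1, Equiv.Perm.inv_apply_self]
      simp
    · intro i
      apply Fin.ext
      simp only
      have h2 := keyinv ⟨(i:ℕ)+1, by omega⟩ (by simp)
      have e1 : (⟨(σ⁻¹ ⟨(i:ℕ)+1, by omega⟩ : ℕ) - 1 + 1, by omega⟩ : Fin (m+1)) = σ⁻¹ ⟨(i:ℕ)+1, by omega⟩ :=
        Fin.ext (by simp only; omega)
      rw [e1, Equiv.Perm.apply_inv_self]
      simp
  refine ⟨τ, ?_, ?_⟩
  · refine pat_ext (by omega) ?_
    intro k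
    by_cases hk : (k : ℕ) = 0
    · rw [val1a _ _ (by simp [hk]), show k = 0 from Fin.ext hk, h0]
    · have h2 := key k hk
      have hkv := k.isLt
      rw [val1b _ _ ⟨(k:ℕ)-1, by omega⟩ (by simp; omega), hτ]
      have e1 : (⟨(⟨(k:ℕ)-1, by omega⟩ : Fin m) + 1, by omega⟩ : Fin (m+1)) = k :=
        Fin.ext (by simp only; omega)
      rw [e1]
      omega
  · show ∃ f : Fin m → Fin (m+1), StrictMono f ∧
        ∀ s t, τ s < τ t ↔ σ (f s) < σ (f t)
    refine ⟨fun i => ⟨(i:ℕ)+1, by omega⟩, ?_, ?_⟩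
    · intro s t hst
      rw [Fin.lt_def] at hst ⊢
      simpa using hst
    · intro s t
      dsimp only
      rw [Fin.lt_def, Fin.lt_def, hτ s, hτ t]
      have hs := key ⟨(s:ℕ)+1, by omega⟩ (by simp)
      have ht := key ⟨(t:ℕ)+1, by omega⟩ (by simp)
      constructor <;> intro h <;> omega


lemma decompB {m : ℕ} (σ : Equiv.Perm (Fin (m+1))) (h0 : (σ 0 : ℕ) = m) :
    ∃ τ : Equiv.Perm (Fin m), (⟨m+1, σ⟩ : Pattern) = ⟨1+m, skewPerm 1 τ⟩ ∧
      Contains ⟨m, τ⟩ ⟨m+1, σ⟩ := by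
  have key : ∀ k : Fin (m+1), (k : ℕ) ≠ 0 → (σ k : ℕ) < m := by
    intro k hk
    have h1 := (σ k).isLt
    rcases Nat.lt_or_ge (σ k : ℕ) m with h | h
    · exact h
    · exfalso
      have : σ k = σ 0 := Fin.ext (by rw [h0]; omega)
      exact hk (congrArg Fin.val (σ.injective this))
  have keyinv : ∀ k : Fin (m+1), (k : ℕ) ≠ m → 1 ≤ (σ⁻¹ k : ℕ) := by
    intro k hk
    rcases Nat.eq_zero_or_pos (σ⁻¹ k : ℕ) with h | h
    · exfalso
      have h2 : σ⁻¹ k = 0 := Fin.ext h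
      have := congrArg σ h2
      rw [Equiv.Perm.apply_inv_self] at this
      exact hk (by rw [this, h0])
    · exact h
  obtain ⟨τ, hτ⟩ : ∃ τ : Equiv.Perm (Fin m),
      ∀ i : Fin m, (τ i : ℕ) = (σ ⟨(i:ℕ)+1, by omega⟩ : ℕ) := by
    refine ⟨⟨fun i => ⟨(σ ⟨(i:ℕ)+1, by omega⟩ : ℕ), key ⟨(i:ℕ)+1, by omega⟩ (by simp)⟩,
      fun j => ⟨(σ⁻¹ ⟨(j:ℕ), by omega⟩ : ℕ) - 1, by
        have h1 := (σ⁻¹ (⟨(j:ℕ), by omega⟩ : Fin (m+1))).isLt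
        have h2 := j.isLt
        omega⟩, ?_, ?_⟩, fun i => rfl⟩
    · intro i
      apply Fin.ext
      simp only
      have e1 : (⟨((σ ⟨(i:ℕ)+1, by omega⟩ : Fin (m+1)) : ℕ), by omega⟩ : Fin (m+1)) =
          σ ⟨(i:ℕ)+1, by omega⟩ := Fin.ext (by simp only)
      rw [e1, Equiv.Perm.inv_apply_self]
      simp
    · intro j
      apply Fin.ext
      simp only
      have h2 := keyinv ⟨(j:ℕ), by omega⟩ (by simp only; omega)
      have e1 : (⟨(σ⁻¹ ⟨(j:ℕ), by omega⟩ : ℕ) - 1 + 1, by omega⟩ : Fin (m+1)) =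
          σ⁻¹ ⟨(j:ℕ), by omega⟩ := Fin.ext (by simp only; omega)
      rw [e1, Equiv.Perm.apply_inv_self]
  refine ⟨τ, ?_, ?_⟩
  · refine pat_ext (by omega) ?_
    intro k
    by_cases hk : (k : ℕ) = 0
    · rw [val2a _ _ (by simp [hk]), show k = 0 from Fin.ext hk, h0]
    · have hkv := k.isLt
      rw [val2b _ _ ⟨(k:ℕ)-1, by omega⟩ (by simp; omega), hτ]
      have e1 : (⟨(⟨(k:ℕ)-1, by omega⟩ : Fin m) + 1, by omega⟩ : Fin (m+1)) = k :=
        Fin.ext (by simp only; omega)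
      rw [e1]
  · show ∃ f : Fin m → Fin (m+1), StrictMono f ∧
        ∀ s t, τ s < τ t ↔ σ (f s) < σ (f t)
    refine ⟨fun i => ⟨(i:ℕ)+1, by omega⟩, ?_, ?_⟩
    · intro s t hst
      rw [Fin.lt_def] at hst ⊢
      simpa using hst
    · intro s t
      rw [Fin.lt_def, Fin.lt_def, hτ s, hτ t]

lemma decompC {m : ℕ} (σ : Equiv.Perm (Fin (m+1))) (h0 : (σ (Fin.last m) : ℕ) = m) :
    ∃ τ : Equiv.Perm (Fin m), (⟨m+1, σ⟩ : Pattern) = ⟨m+1, sumPerm τ 1⟩ ∧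
      Contains ⟨m, τ⟩ ⟨m+1, σ⟩ := by
  have key : ∀ k : Fin (m+1), (k : ℕ) ≠ m → (σ k : ℕ) < m := by
    intro k hk
    have h1 := (σ k).isLt
    rcases Nat.lt_or_ge (σ k : ℕ) m with h | h
    · exact h
    · exfalso
      have : σ k = σ (Fin.last m) := Fin.ext (by rw [h0]; omega)
      exact hk (by have := congrArg Fin.val (σ.injective this); rw [this]; rfl)
  have keyinv : ∀ k : Fin (m+1), (k : ℕ) ≠ m → (σ⁻¹ k : ℕ) < m := by
    intro k hk
    have h1 := (σ⁻¹ k).isLt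
    rcases Nat.lt_or_ge (σ⁻¹ k : ℕ) m with h | h
    · exact h
    · exfalso
      have h2 : σ⁻¹ k = Fin.last m := Fin.ext (by simp only [Fin.val_last]; omega)
      have := congrArg σ h2
      rw [Equiv.Perm.apply_inv_self] at this
      exact hk (by rw [this, h0])
  obtain ⟨τ, hτ⟩ : ∃ τ : Equiv.Perm (Fin m),
      ∀ i : Fin m, (τ i : ℕ) = (σ ⟨(i:ℕ), by omega⟩ : ℕ) := by
    refine ⟨⟨fun i => ⟨(σ ⟨(i:ℕ), by omega⟩ : ℕ), key ⟨(i:ℕ), by omega⟩ (by simp only; omega)⟩,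
      fun j => ⟨(σ⁻¹ ⟨(j:ℕ), by omega⟩ : ℕ), keyinv ⟨(j:ℕ), by omega⟩ (by simp only; omega)⟩,
      ?_, ?_⟩, fun i => rfl⟩
    · intro i
      apply Fin.ext
      simp only
      have e1 : (⟨((σ ⟨(i:ℕ), by omega⟩ : Fin (m+1)) : ℕ), by omega⟩ : Fin (m+1)) =
          σ ⟨(i:ℕ), by omega⟩ := Fin.ext (by simp only)
      rw [e1, Equiv.Perm.inv_apply_self]
    · intro j
      apply Fin.ext
      simp only
      have e1 : (⟨((σ⁻¹ ⟨(j:ℕ), by omega⟩ : Fin (m+1)) : ℕ), by omega⟩ : Fin (m+1)) =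
          σ⁻¹ ⟨(j:ℕ), by omega⟩ := Fin.ext (by simp only)
      rw [e1, Equiv.Perm.apply_inv_self]
  refine ⟨τ, ?_, ?_⟩
  · refine pat_ext rfl ?_
    intro k
    have hkv := k.isLt
    by_cases hk : (k : ℕ) = m
    · rw [val3a _ _ (by simp [hk]), show k = Fin.last m from Fin.ext hk, h0]
    · rw [val3b _ _ ⟨(k:ℕ), by omega⟩ (by simp), hτ]
  · show ∃ f : Fin m → Fin (m+1), StrictMono f ∧
        ∀ s t, τ s < τ t ↔ σ (f s) < σ (f t)
    refine ⟨fun i => ⟨(i:ℕ), by omega⟩, ?_, ?_⟩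
    · intro s t hst
      rw [Fin.lt_def] at hst ⊢
      simpa using hst
    · intro s t
      rw [Fin.lt_def, Fin.lt_def, hτ s, hτ t]

lemma decompD {m : ℕ} (σ : Equiv.Perm (Fin (m+1))) (h0 : (σ (Fin.last m) : ℕ) = 0) :
    ∃ τ : Equiv.Perm (Fin m), (⟨m+1, σ⟩ : Pattern) = ⟨m+1, skewPerm τ 1⟩ ∧
      Contains ⟨m, τ⟩ ⟨m+1, σ⟩ := by
  have key : ∀ k : Fin (m+1), (k : ℕ) ≠ m → 1 ≤ (σ k : ℕ) := by
    intro k hk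
    rcases Nat.eq_zero_or_pos (σ k : ℕ) with h | h
    · exfalso
      have : σ k = σ (Fin.last m) := Fin.ext (by rw [h0]; omega)
      exact hk (by have := congrArg Fin.val (σ.injective this); rw [this]; rfl)
    · exact h
  have keyinv : ∀ k : Fin (m+1), (k : ℕ) ≠ 0 → (σ⁻¹ k : ℕ) < m := by
    intro k hk
    have h1 := (σ⁻¹ k).isLt
    rcases Nat.lt_or_ge (σ⁻¹ k : ℕ) m with h | h
    · exact h
    · exfalso
      have h2 : σ⁻¹ k = Fin.last m := Fin.ext (by simp only [Fin.val_last]; omega)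
      have := congrArg σ h2
      rw [Equiv.Perm.apply_inv_self] at this
      exact hk (by rw [this, h0])
  obtain ⟨τ, hτ⟩ : ∃ τ : Equiv.Perm (Fin m),
      ∀ i : Fin m, (τ i : ℕ) = (σ ⟨(i:ℕ), by omega⟩ : ℕ) - 1 := by
    refine ⟨⟨fun i => ⟨(σ ⟨(i:ℕ), by omega⟩ : ℕ) - 1, by
        have h1 := (σ (⟨(i:ℕ), by omega⟩ : Fin (m+1))).isLt
        have h2 := key ⟨(i:ℕ), by omega⟩ (by simp only; omega)
        omega⟩,
      fun j => ⟨(σ⁻¹ ⟨(j:ℕ)+1, by omega⟩ : ℕ), keyinv ⟨(j:ℕ)+1, by omega⟩ (by simp)⟩,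
      ?_, ?_⟩, fun i => rfl⟩
    · intro i
      apply Fin.ext
      simp only
      have h2 := key ⟨(i:ℕ), by omega⟩ (by simp only; omega)
      have e1 : (⟨(σ ⟨(i:ℕ), by omega⟩ : ℕ) - 1 + 1, by omega⟩ : Fin (m+1)) =
          σ ⟨(i:ℕ), by omega⟩ := Fin.ext (by simp only; omega)
      rw [e1, Equiv.Perm.inv_apply_self]
    · intro j
      apply Fin.ext
      simp only
      have e1 : (⟨((σ⁻¹ ⟨(j:ℕ)+1, by omega⟩ : Fin (m+1)) : ℕ), by omega⟩ : Fin (m+1)) =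
          σ⁻¹ ⟨(j:ℕ)+1, by omega⟩ := Fin.ext (by simp only)
      rw [e1, Equiv.Perm.apply_inv_self]
      simp
  refine ⟨τ, ?_, ?_⟩
  · refine pat_ext rfl ?_
    intro k
    have hkv := k.isLt
    by_cases hk : (k : ℕ) = m
    · rw [val4a _ _ (by simp [hk]), show k = Fin.last m from Fin.ext hk, h0]
    · have h2 := key k hk
      rw [val4b _ _ ⟨(k:ℕ), by omega⟩ (by simp), hτ]
      have e1 : (⟨(⟨(k:ℕ), by omega⟩ : Fin m), by omega⟩ : Fin (m+1)) = k := Fin.ext rfl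
      rw [e1]
      omega
  · show ∃ f : Fin m → Fin (m+1), StrictMono f ∧
        ∀ s t, τ s < τ t ↔ σ (f s) < σ (f t)
    refine ⟨fun i => ⟨(i:ℕ), by omega⟩, ?_, ?_⟩
    · intro s t hst
      rw [Fin.lt_def] at hst ⊢
      simpa using hst
    · intro s t
      dsimp only
      rw [Fin.lt_def, Fin.lt_def, hτ s, hτ t]
      have hs := key ⟨(s:ℕ), by omega⟩ (by simp only; omega)
      have ht := key ⟨(t:ℕ), by omega⟩ (by simp only; omega)
      constructor <;> intro h <;> omega

lemma InX_avoids (p : Pattern) (h : InX p) :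
    ¬ Contains ⟨4, p2143⟩ p ∧ ¬ Contains ⟨4, p2413⟩ p ∧
      ¬ Contains ⟨4, p3142⟩ p ∧ ¬ Contains ⟨4, p3412⟩ p := by
  induction h with
  | base =>
    refine ⟨?_, ?_, ?_, ?_⟩ <;>
    · rintro ⟨f, hf, -⟩
      dsimp only [onePat] at f hf
      have h01 := hf (show (0 : Fin 4) < 1 by decide)
      rw [Subsingleton.elim (f 0) (f 1)] at h01
      exact lt_irrefl _ h01
  | @sumL q hq ih =>
    obtain ⟨i1, i2, i3, i4⟩ := ih
    exact ⟨fwd_sumL p2143 q.2 1 (by decide) i1, fwd_sumL p2413 q.2 2 (by decide) i2,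
      fwd_sumL p3142 q.2 1 (by decide) i3, fwd_sumL p3412 q.2 2 (by decide) i4⟩
  | @skewL q hq ih =>
    obtain ⟨i1, i2, i3, i4⟩ := ih
    exact ⟨fwd_skewL p2143 q.2 2 (by decide) i1, fwd_skewL p2413 q.2 1 (by decide) i2,
      fwd_skewL p3142 q.2 2 (by decide) i3, fwd_skewL p3412 q.2 1 (by decide) i4⟩
  | @sumR q hq ih =>
    obtain ⟨i1, i2, i3, i4⟩ := ih
    exact ⟨fwd_sumR p2143 q.2 2 (by decide) i1, fwd_sumR p2413 q.2 1 (by decide) i2,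
      fwd_sumR p3142 q.2 2 (by decide) i3, fwd_sumR p3412 q.2 1 (by decide) i4⟩
  | @skewR q hq ih =>
    obtain ⟨i1, i2, i3, i4⟩ := ih
    exact ⟨fwd_skewR p2143 q.2 1 (by decide) i1, fwd_skewR p2413 q.2 2 (by decide) i2,
      fwd_skewR p3142 q.2 1 (by decide) i3, fwd_skewR p3412 q.2 2 (by decide) i4⟩

lemma avoids_InX (n : ℕ) : ∀ σ : Equiv.Perm (Fin n), 0 < n →
    ¬ Contains ⟨4, p2143⟩ ⟨n, σ⟩ → ¬ Contains ⟨4, p2413⟩ ⟨n, σ⟩ →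
    ¬ Contains ⟨4, p3142⟩ ⟨n, σ⟩ → ¬ Contains ⟨4, p3412⟩ ⟨n, σ⟩ → InX ⟨n, σ⟩ := by
  induction n using Nat.strong_induction_on with
  | _ n ih =>
    intro σ hn h1 h2 h3 h4
    match n, σ, hn, h1, h2, h3, h4, ih with
    | 1, σ, hn, h1, h2, h3, h4, ih =>
      rw [Subsingleton.elim σ 1]
      exact InX.base
    | (m+2), σ, hn, h1, h2, h3, h4, ih =>
      rcases structural σ h1 h2 h3 h4 with h0 | h0 | h0 | h0
      · obtain ⟨τ, heq, hcont⟩ := decompA σ h0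
        have hτ : InX ⟨m+1, τ⟩ := ih (m+1) (by omega) τ (by omega)
          (fun hc => h1 (contains_trans hc hcont)) (fun hc => h2 (contains_trans hc hcont))
          (fun hc => h3 (contains_trans hc hcont)) (fun hc => h4 (contains_trans hc hcont))
        rw [heq]
        exact InX.sumL hτ
      · obtain ⟨τ, heq, hcont⟩ := decompB σ h0
        have hτ : InX ⟨m+1, τ⟩ := ih (m+1) (by omega) τ (by omega)
          (fun hc => h1 (contains_trans hc hcont)) (fun hc => h2 (contains_trans hc hcont))
          (fun hc => h3 (contains_trans hc hcont)) (fun hc => h4 (contains_trans hc hcont))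
        rw [heq]
        exact InX.skewL hτ
      · obtain ⟨τ, heq, hcont⟩ := decompC σ h0
        have hτ : InX ⟨m+1, τ⟩ := ih (m+1) (by omega) τ (by omega)
          (fun hc => h1 (contains_trans hc hcont)) (fun hc => h2 (contains_trans hc hcont))
          (fun hc => h3 (contains_trans hc hcont)) (fun hc => h4 (contains_trans hc hcont))
        rw [heq]
        exact InX.sumR hτ
      · obtain ⟨τ, heq, hcont⟩ := decompD σ h0
        have hτ : InX ⟨m+1, τ⟩ := ih (m+1) (by omega) τ (by omega)
          (fun hc => h1 (contains_trans hc hcont)) (fun hc => h2 (contains_trans hc hcont))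
          (fun hc => h3 (contains_trans hc hcont)) (fun hc => h4 (contains_trans hc hcont))
        rw [heq]
        exact InX.skewR hτ


/-- a (nonempty) permutation lies in the closure of {1} under the four
operations iff it avoids 2143, 2413, 3142 and 3412. -/
theorem InX_iff_avoids (p : Pattern) (hne : 0 < p.1) :
    InX p ↔
      ¬ Contains ⟨4, p2143⟩ p ∧ ¬ Contains ⟨4, p2413⟩ p ∧
      ¬ Contains ⟨4, p3142⟩ p ∧ ¬ Contains ⟨4, p3412⟩ p := by
  constructor
  · exact InX_avoids p
  · rintro ⟨h1, h2, h3, h4⟩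
    exact avoids_InX p.1 p.2 hne h1 h2 h3 h4
end

section
/- The number x_n of permutations of size n in the class X = Av(2143, 2413, 3142, 3412) satisfies the generating function identity Σ_{n≥0} x_n t^n = (1−2t)/(1−4t+2t²); equivalently, x_0 = 1, x_1 = 1, x_2 = 2, and x_n = 4x_{n−1} − 2x_{n−2} for n ≥ 3. -/
open Equiv Filter

/-- Membership in X, with the empty permutation included (for size 0). -/
def InX0 (p : Pattern) : Prop := InX p ∨ p.1 = 0

/-- The number of permutations of size n in the class X. -/
noncomputable def xcount (n : ℕ) : ℕ :=
  Nat.card {σ : Equiv.Perm (Fin n) // InX0 ⟨n, σ⟩}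

/-!
A permutation of `X` of size at least two begins with its minimum or its maximum, or ends with
its maximum or its minimum. Those beginning with their minimum are exactly the `1 ⊕ τ` with
`τ ∈ X`: deleting that minimum stays inside `X` because prepending a minimum commutes with
appending a maximum. The symmetries of the square preserve `X`, so each of the four families has
`x_{n+1}` members of size `n + 2`. Complementation exchanges "begins with min or ends with max"
with "begins with max or ends with min", and these two families are disjoint; inclusion-exclusion,
the overlap "begins with min and ends with max" being the `1 ⊕ τ ⊕ 1`, gives
`x_{n+2} = 2 (2 x_{n+1} - x_n)`.
-/

namespace Equiv.Perm

section Insertion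

variable {n : ℕ}

def consMin (τ : Perm (Fin n)) : Perm (Fin (n + 1)) where
  toFun := Fin.cases 0 fun i => (τ i).succ
  invFun := Fin.cases 0 fun i => (τ.symm i).succ
  left_inv x := by cases x using Fin.cases <;> simp
  right_inv x := by cases x using Fin.cases <;> simp

def consMax (τ : Perm (Fin n)) : Perm (Fin (n + 1)) where
  toFun := Fin.cases (Fin.last n) fun i => (τ i).castSucc
  invFun := Fin.lastCases 0 fun i => (τ.symm i).succ
  left_inv x := by cases x using Fin.cases <;> simp
  right_inv x := by cases x using Fin.lastCases <;> simp

def snocMax (τ : Perm (Fin n)) : Perm (Fin (n + 1)) where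
  toFun := Fin.lastCases (Fin.last n) fun i => (τ i).castSucc
  invFun := Fin.lastCases (Fin.last n) fun i => (τ.symm i).castSucc
  left_inv x := by cases x using Fin.lastCases <;> simp
  right_inv x := by cases x using Fin.lastCases <;> simp

def snocMin (τ : Perm (Fin n)) : Perm (Fin (n + 1)) where
  toFun := Fin.lastCases 0 fun i => (τ i).succ
  invFun := Fin.cases (Fin.last n) fun i => (τ.symm i).castSucc
  left_inv x := by cases x using Fin.lastCases <;> simp
  right_inv x := by cases x using Fin.cases <;> simp

variable (τ : Perm (Fin n)) (i : Fin n)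

@[simp] lemma consMin_zero : consMin τ 0 = 0 := rfl
@[simp] lemma consMin_succ : consMin τ i.succ = (τ i).succ := rfl
@[simp] lemma consMax_zero : consMax τ 0 = Fin.last n := rfl
@[simp] lemma consMax_succ : consMax τ i.succ = (τ i).castSucc := rfl
@[simp] lemma snocMax_last : snocMax τ (Fin.last n) = Fin.last n := by simp [snocMax]
@[simp] lemma snocMax_castSucc : snocMax τ i.castSucc = (τ i).castSucc := by simp [snocMax]
@[simp] lemma snocMin_last : snocMin τ (Fin.last n) = 0 := by simp [snocMin]
@[simp] lemma snocMin_castSucc : snocMin τ i.castSucc = (τ i).succ := by simp [snocMin]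

lemma consMin_injective : Function.Injective (consMin (n := n)) := fun τ ρ h =>
  Equiv.ext fun i => Fin.succ_injective _ (by simpa using DFunLike.congr_fun h i.succ)

lemma snocMax_consMin : snocMax (consMin τ) = consMin (snocMax τ) := by
  refine Equiv.ext fun x => ?_
  cases x using Fin.lastCases with
  | last => rw [snocMax_last, ← Fin.succ_last, consMin_succ, snocMax_last]
  | cast j =>
    cases j using Fin.cases with
    | zero => rw [snocMax_castSucc, consMin_zero]; rfl
    | succ i =>
      rw [snocMax_castSucc, consMin_succ, ← Fin.succ_castSucc i, consMin_succ, snocMax_castSucc,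
        Fin.succ_castSucc]

end Insertion

section Symmetry

variable {n : ℕ}

attribute [local simp] Fin.rev_succ Fin.rev_castSucc

def complement (σ : Perm (Fin n)) : Perm (Fin n) := σ.trans Fin.revPerm

def reverseComplement (σ : Perm (Fin n)) : Perm (Fin n) :=
  (Fin.revPerm.trans σ).trans Fin.revPerm

@[simp] lemma complement_apply (σ : Perm (Fin n)) (i : Fin n) : complement σ i = (σ i).rev := rfl

@[simp] lemma reverseComplement_apply (σ : Perm (Fin n)) (i : Fin n) :
    reverseComplement σ i = (σ i.rev).rev := rfl

lemma complement_involutive : Function.Involutive (complement (n := n)) := fun σ => by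
  ext; simp

lemma reverseComplement_involutive : Function.Involutive (reverseComplement (n := n)) :=
  fun σ => by ext; simp

variable (τ : Perm (Fin n))

lemma complement_consMin : complement (consMin τ) = consMax (complement τ) := by
  refine Equiv.ext fun x => ?_
  cases x using Fin.cases <;> simp

lemma complement_consMax : complement (consMax τ) = consMin (complement τ) := by
  refine Equiv.ext fun x => ?_
  cases x using Fin.cases <;> simp

lemma complement_snocMax : complement (snocMax τ) = snocMin (complement τ) := by
  refine Equiv.ext fun x => ?_
  cases x using Fin.lastCases <;> simp

lemma complement_snocMin : complement (snocMin τ) = snocMax (complement τ) := by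
  refine Equiv.ext fun x => ?_
  cases x using Fin.lastCases <;> simp

lemma reverseComplement_consMin :
    reverseComplement (consMin τ) = snocMax (reverseComplement τ) := by
  refine Equiv.ext fun x => ?_
  cases x using Fin.lastCases <;> simp

lemma reverseComplement_consMax :
    reverseComplement (consMax τ) = snocMin (reverseComplement τ) := by
  refine Equiv.ext fun x => ?_
  cases x using Fin.lastCases <;> simp

lemma reverseComplement_snocMax :
    reverseComplement (snocMax τ) = consMin (reverseComplement τ) := by
  refine Equiv.ext fun x => ?_
  cases x using Fin.cases <;> simp

lemma reverseComplement_snocMin :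
    reverseComplement (snocMin τ) = consMax (reverseComplement τ) := by
  refine Equiv.ext fun x => ?_
  cases x using Fin.cases <;> simp

end Symmetry

end Equiv.Perm

open Perm

-- Starting from the empty permutation, rather than from `1` as `InX` does, lets
-- `exists_consMin_eq` hold down to size one.
inductive IsXPerm : ∀ n, Perm (Fin n) → Prop
  | empty : IsXPerm 0 1
  | consMin {n : ℕ} {τ : Perm (Fin n)} : IsXPerm n τ → IsXPerm (n + 1) τ.consMin
  | consMax {n : ℕ} {τ : Perm (Fin n)} : IsXPerm n τ → IsXPerm (n + 1) τ.consMax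
  | snocMax {n : ℕ} {τ : Perm (Fin n)} : IsXPerm n τ → IsXPerm (n + 1) τ.snocMax
  | snocMin {n : ℕ} {τ : Perm (Fin n)} : IsXPerm n τ → IsXPerm (n + 1) τ.snocMin

namespace IsXPerm

variable {n : ℕ} {σ : Perm (Fin n)}

lemma of_fin_zero (σ : Perm (Fin 0)) : IsXPerm 0 σ := Subsingleton.elim 1 σ ▸ empty

lemma of_fin_one (σ : Perm (Fin 1)) : IsXPerm 1 σ :=
  Subsingleton.elim (α := Perm (Fin 1)) (1 : Perm (Fin 0)).consMin σ ▸ empty.consMin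

lemma complement (h : IsXPerm n σ) : IsXPerm n σ.complement := by
  induction h with
  | empty => exact of_fin_zero _
  | consMin _ ih => rw [complement_consMin]; exact ih.consMax
  | consMax _ ih => rw [complement_consMax]; exact ih.consMin
  | snocMax _ ih => rw [complement_snocMax]; exact ih.snocMin
  | snocMin _ ih => rw [complement_snocMin]; exact ih.snocMax

lemma reverseComplement (h : IsXPerm n σ) : IsXPerm n σ.reverseComplement := by
  induction h with
  | empty => exact of_fin_zero _
  | consMin _ ih => rw [reverseComplement_consMin]; exact ih.snocMax
  | consMax _ ih => rw [reverseComplement_consMax]; exact ih.snocMin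
  | snocMax _ ih => rw [reverseComplement_snocMax]; exact ih.consMin
  | snocMin _ ih => rw [reverseComplement_snocMin]; exact ih.consMax

lemma map_zero_or_map_last {σ : Perm (Fin (n + 1))} (h : IsXPerm (n + 1) σ) :
    σ 0 = 0 ∨ σ (Fin.last n) = Fin.last n ∨ σ 0 = Fin.last n ∨ σ (Fin.last n) = 0 := by
  cases h <;> simp

lemma exists_consMin_eq {σ : Perm (Fin (n + 1))} (h : IsXPerm (n + 1) σ) (h0 : σ 0 = 0) :
    ∃ τ, IsXPerm n τ ∧ τ.consMin = σ := by
  induction n with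
  | zero => exact ⟨1, empty, Subsingleton.elim (α := Perm (Fin 1)) _ _⟩
  | succ n ih =>
    cases h with
    | consMin hτ => exact ⟨_, hτ, rfl⟩
    | consMax => simp [Fin.ext_iff] at h0
    | snocMin =>
      rw [← Fin.castSucc_zero, snocMin_castSucc] at h0
      exact absurd h0 (Fin.succ_ne_zero _)
    | snocMax hτ =>
      rw [← Fin.castSucc_zero, snocMax_castSucc] at h0
      obtain ⟨ρ, hρ, rfl⟩ := ih hτ (Fin.castSucc_injective _ h0)
      exact ⟨_, hρ.snocMax, (snocMax_consMin ρ).symm⟩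

end IsXPerm

lemma Pattern.mk_eq_mk {m n : ℕ} (h : m = n) {σ : Perm (Fin m)} {τ : Perm (Fin n)}
    (he : ∀ i, (σ (Fin.cast h.symm i) : ℕ) = τ i) : (⟨m, σ⟩ : Pattern) = ⟨n, τ⟩ := by
  subst h
  congr
  ext i
  exact he i

lemma Pattern.eq_onePat {p : Pattern} (h : p.1 = 1) : p = onePat := by
  obtain ⟨n, σ⟩ := p
  subst h
  exact congrArg _ (Subsingleton.elim _ _)

section SumWithOne

variable {n : ℕ} (τ : Perm (Fin n))

lemma onePat_sumP : sumP onePat ⟨n, τ⟩ = ⟨n + 1, τ.consMin⟩ := by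
  change (⟨1 + n, sumPerm 1 τ⟩ : Pattern) = _
  refine Pattern.mk_eq_mk (Nat.add_comm 1 n) fun i => ?_
  cases i using Fin.cases with
  | zero =>
    change (sumPerm 1 τ (Fin.castAdd n 0) : ℕ) = _
    simp [sumPerm]
  | succ i =>
    rw [show Fin.cast _ i.succ = Fin.natAdd 1 i from Fin.ext (Nat.add_comm _ _)]
    simp [sumPerm, Nat.add_comm]

lemma onePat_skewP : skewP onePat ⟨n, τ⟩ = ⟨n + 1, τ.consMax⟩ := by
  change (⟨1 + n, skewPerm 1 τ⟩ : Pattern) = _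
  refine Pattern.mk_eq_mk (Nat.add_comm 1 n) fun i => ?_
  cases i using Fin.cases with
  | zero =>
    change (skewPerm 1 τ (Fin.castAdd n 0) : ℕ) = _
    simp [skewPerm]
  | succ i =>
    rw [show Fin.cast _ i.succ = Fin.natAdd 1 i from Fin.ext (Nat.add_comm _ _)]
    simp [skewPerm]

lemma sumP_onePat : sumP ⟨n, τ⟩ onePat = ⟨n + 1, τ.snocMax⟩ := by
  change (⟨n + 1, sumPerm τ 1⟩ : Pattern) = _
  refine Pattern.mk_eq_mk rfl fun i => ?_
  cases i using Fin.lastCases with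
  | last =>
    change (sumPerm τ 1 (Fin.natAdd n 0) : ℕ) = _
    simp [sumPerm]
  | cast i =>
    change (sumPerm τ 1 (Fin.castAdd 1 i) : ℕ) = _
    simp [sumPerm]

lemma skewP_onePat : skewP ⟨n, τ⟩ onePat = ⟨n + 1, τ.snocMin⟩ := by
  change (⟨n + 1, skewPerm τ 1⟩ : Pattern) = _
  refine Pattern.mk_eq_mk rfl fun i => ?_
  cases i using Fin.lastCases with
  | last =>
    change (skewPerm τ 1 (Fin.natAdd n 0) : ℕ) = _
    simp [skewPerm]
  | cast i =>
    change (skewPerm τ 1 (Fin.castAdd 1 i) : ℕ) = _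
    simp [skewPerm, Nat.add_comm]

end SumWithOne

lemma InX.isXPerm {p : Pattern} (h : InX p) : IsXPerm p.1 p.2 := by
  induction h with
  | base => exact .of_fin_one _
  | @sumL p _ ih => obtain ⟨n, τ⟩ := p; rw [onePat_sumP]; exact ih.consMin
  | @skewL p _ ih => obtain ⟨n, τ⟩ := p; rw [onePat_skewP]; exact ih.consMax
  | @sumR p _ ih => obtain ⟨n, τ⟩ := p; rw [sumP_onePat]; exact ih.snocMax
  | @skewR p _ ih => obtain ⟨n, τ⟩ := p; rw [skewP_onePat]; exact ih.snocMin

lemma InX0.inX_of_size_eq_succ {p q : Pattern} (hp : InX0 p) (hq : q.1 = p.1 + 1)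
    (step : InX p → InX q) : InX q :=
  hp.elim step fun (h0 : p.1 = 0) => by rw [Pattern.eq_onePat (p := q) (by omega)]; exact .base

lemma IsXPerm.inX0 {n : ℕ} {σ : Perm (Fin n)} (h : IsXPerm n σ) : InX0 ⟨n, σ⟩ := by
  induction h with
  | empty => exact .inr rfl
  | @consMin n τ _ ih =>
    exact .inl (onePat_sumP τ ▸ ih.inX_of_size_eq_succ (Nat.add_comm 1 n) .sumL)
  | @consMax n τ _ ih =>
    exact .inl (onePat_skewP τ ▸ ih.inX_of_size_eq_succ (Nat.add_comm 1 n) .skewL)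
  | @snocMax n τ _ ih => exact .inl (sumP_onePat τ ▸ ih.inX_of_size_eq_succ rfl .sumR)
  | @snocMin n τ _ ih => exact .inl (skewP_onePat τ ▸ ih.inX_of_size_eq_succ rfl .skewR)

lemma inX0_iff_isXPerm {n : ℕ} (σ : Perm (Fin n)) : InX0 ⟨n, σ⟩ ↔ IsXPerm n σ where
  mp := by
    rintro (h | h0)
    · exact h.isXPerm
    · obtain rfl : n = 0 := h0
      exact .of_fin_zero σ
  mpr := IsXPerm.inX0

lemma xcount_eq_ncard (n : ℕ) : xcount n = {σ : Perm (Fin n) | IsXPerm n σ}.ncard := by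
  rw [xcount, ← Nat.card_coe_set_eq]
  exact Nat.card_congr (Equiv.subtypeEquivRight inX0_iff_isXPerm)

def startMin (n : ℕ) : Set (Perm (Fin (n + 1))) := {σ | IsXPerm (n + 1) σ ∧ σ 0 = 0}

def endMax (n : ℕ) : Set (Perm (Fin (n + 1))) :=
  {σ | IsXPerm (n + 1) σ ∧ σ (Fin.last n) = Fin.last n}

lemma startMin_eq_image (n : ℕ) : startMin n = consMin '' {τ | IsXPerm n τ} := by
  ext σ
  constructor
  · rintro ⟨h, h0⟩
    exact h.exists_consMin_eq h0
  · rintro ⟨τ, hτ, rfl⟩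
    exact ⟨hτ.consMin, consMin_zero τ⟩

lemma endMax_eq_image (n : ℕ) : endMax n = reverseComplement '' startMin n := by
  ext σ
  constructor
  · rintro ⟨h, hl⟩
    exact ⟨_, ⟨h.reverseComplement, by simp [hl]⟩, reverseComplement_involutive σ⟩
  · rintro ⟨τ, ⟨h, h0⟩, rfl⟩
    exact ⟨h.reverseComplement, by simp [h0]⟩

lemma startMin_inter_endMax (n : ℕ) :
    startMin (n + 1) ∩ endMax (n + 1) = consMin '' endMax n := by
  rw [startMin_eq_image]
  ext σ
  constructor
  · rintro ⟨⟨τ, hτ, rfl⟩, -, hl⟩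
    refine ⟨τ, ⟨hτ, ?_⟩, rfl⟩
    simpa [← Fin.succ_last] using hl
  · rintro ⟨τ, ⟨hτ, hl⟩, rfl⟩
    exact ⟨⟨τ, hτ, rfl⟩, hτ.consMin, by simp [← Fin.succ_last, hl]⟩

lemma setOf_isXPerm_eq_union (n : ℕ) :
    {σ | IsXPerm (n + 2) σ} =
      (startMin (n + 1) ∪ endMax (n + 1)) ∪ complement '' (startMin (n + 1) ∪ endMax (n + 1)) := by
  ext σ
  constructor
  · intro h
    rcases h.map_zero_or_map_last with h0 | hl | h0 | hl
    · exact .inl (.inl ⟨h, h0⟩)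
    · exact .inl (.inr ⟨h, hl⟩)
    · exact .inr ⟨_, .inl ⟨h.complement, by simp [h0]⟩, complement_involutive σ⟩
    · exact .inr ⟨_, .inr ⟨h.complement, by simp [hl]⟩, complement_involutive σ⟩
  · rintro ((⟨h, -⟩ | ⟨h, -⟩) | ⟨τ, ⟨h, -⟩ | ⟨h, -⟩, rfl⟩)
    exacts [h, h, h.complement, h.complement]

lemma disjoint_complement_image (n : ℕ) :
    Disjoint (startMin (n + 1) ∪ endMax (n + 1))
      (complement '' (startMin (n + 1) ∪ endMax (n + 1))) := by
  have hne : (0 : Fin (n + 2)) ≠ Fin.last (n + 1) := Fin.last_pos.ne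
  rw [Set.disjoint_left]
  rintro _ (⟨-, h1⟩ | ⟨-, h1⟩) ⟨τ, ⟨-, h2⟩ | ⟨-, h2⟩, rfl⟩ <;>
    rw [complement_apply, Fin.rev_eq_iff] at h1 <;> simp only [Fin.rev_zero, Fin.rev_last] at h1
  · exact hne (h2.symm.trans h1)
  · exact hne (τ.injective (h1.trans h2.symm))
  · exact hne (τ.injective (h2.trans h1.symm))
  · exact hne (h1.symm.trans h2)

lemma ncard_startMin (n : ℕ) : (startMin n).ncard = xcount n := by
  rw [startMin_eq_image, Set.ncard_image_of_injective _ consMin_injective, xcount_eq_ncard]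

lemma ncard_endMax (n : ℕ) : (endMax n).ncard = xcount n := by
  rw [endMax_eq_image, Set.ncard_image_of_injective _ reverseComplement_involutive.injective,
    ncard_startMin]

lemma xcount_add_two (n : ℕ) : xcount (n + 2) + 2 * xcount n = 4 * xcount (n + 1) := by
  set S := startMin (n + 1)
  set E := endMax (n + 1)
  have htotal : xcount (n + 2) = (S ∪ E).ncard + (S ∪ E).ncard := by
    rw [xcount_eq_ncard, setOf_isXPerm_eq_union, Set.ncard_union_eq (disjoint_complement_image n),
      Set.ncard_image_of_injective _ complement_involutive.injective]
  have hinter : (S ∩ E).ncard = xcount n := by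
    rw [startMin_inter_endMax, Set.ncard_image_of_injective _ consMin_injective, ncard_endMax]
  have hunion := Set.ncard_union_add_ncard_inter S E
  rw [ncard_startMin, ncard_endMax, hinter] at hunion
  omega

lemma xcount_zero : xcount 0 = 1 := by
  have hall : {σ : Perm (Fin 0) | IsXPerm 0 σ} = Set.univ :=
    Set.eq_univ_of_forall IsXPerm.of_fin_zero
  simp [xcount_eq_ncard, hall]

lemma xcount_one : xcount 1 = 1 := by
  have hall : {σ : Perm (Fin 1) | IsXPerm 1 σ} = Set.univ :=
    Set.eq_univ_of_forall IsXPerm.of_fin_one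
  simp [xcount_eq_ncard, hall]

/-- x_0 = 1, x_1 = 1, x_2 = 2 and x_n = 4·x_{n-1} − 2·x_{n-2} for n ≥ 3
(stated additively, equivalently over ℕ). -/
theorem xcount_recurrence :
    xcount 0 = 1 ∧ xcount 1 = 1 ∧ xcount 2 = 2 ∧
      ∀ n : ℕ, 3 ≤ n → xcount n + 2 * xcount (n - 2) = 4 * xcount (n - 1) := by
  have h2 : xcount 2 + 2 * xcount 0 = 4 * xcount 1 := xcount_add_two 0
  rw [xcount_zero, xcount_one] at h2
  refine ⟨xcount_zero, xcount_one, by omega, fun n hn => ?_⟩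
  obtain ⟨k, rfl⟩ := Nat.exists_eq_add_of_le' hn
  simpa using xcount_add_two (k + 1)
end
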